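/- arXiv:2104.10976 — 7 statements merged into one kernel-verified Lean document; each statement's English description precedes it below -/
import Mathlib

section
/- Let f_k(r) = r^k e^{-r}/k! for k ≥ 0. For any s ≥ 0, T > 0, and 0 ≤ t ≤ T, define A_k(s,T,t) = (∫_s^{s+t} f_k(r) dr)/(∫_s^{s+T} f_k(r) dr). Then A_k(s,T,t) ≥ A_{k+1}(s,T,t) for all k = 0, 1, 2, …. -/
open MeasureTheory

/-- The gamma density `f_k(r) = r^k e^{-r}/k!`. -/
noncomputable def gammaDens (k : ℕ) (r : ℝ) : ℝ := r ^ k * Real.exp (-r) / (Nat.factorial k)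

/-! Since `f_{k+1}(r) = r/(k+1) · f_k(r)`, the density `f_{k+1}` is `f_k` reweighted by an increasing
function. Reweighting a nonnegative density on `[s, s+T]` by an increasing weight `w` can only move
mass to the right: with `m = w(s+t)`, the weighted mass of `[s, s+t]` is at most `m` times the old one,
and that of `[s+t, s+T]` at least `m` times the old one. -/

theorem div_add_le_div_add_of_mul_le {a b a' b' : ℝ} (h : a' * b ≤ a * b') (ha' : 0 < a' + b')
    (ha : 0 < a + b) : a' / (a' + b') ≤ a / (a + b) := by
  rw [div_le_div_iff₀ ha' ha]
  linarith

theorem intervalIntegral_mul_div_le_of_monotoneOn {f w : ℝ → ℝ} {a b c : ℝ} (hab : a ≤ b)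
    (hbc : b ≤ c) (hf : IntervalIntegrable f volume a c)
    (hwf : IntervalIntegrable (fun x => w x * f x) volume a c) (hf₀ : ∀ x ∈ Set.Icc a c, 0 ≤ f x)
    (hw : MonotoneOn w (Set.Icc a c)) (hpos : 0 < ∫ x in a..c, f x)
    (hwpos : 0 < ∫ x in a..c, w x * f x) :
    (∫ x in a..b, w x * f x) / (∫ x in a..c, w x * f x) ≤
      (∫ x in a..b, f x) / ∫ x in a..c, f x := by
  have sub_left : Set.uIcc a b ⊆ Set.uIcc a c :=
    Set.uIcc_subset_uIcc_left (Set.mem_uIcc_of_le hab hbc)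
  have sub_right : Set.uIcc b c ⊆ Set.uIcc a c :=
    Set.uIcc_subset_uIcc_right (Set.mem_uIcc_of_le hab hbc)
  have hb : b ∈ Set.Icc a c := ⟨hab, hbc⟩
  rw [← intervalIntegral.integral_add_adjacent_intervals (hf.mono_set sub_left)
      (hf.mono_set sub_right)] at hpos ⊢
  rw [← intervalIntegral.integral_add_adjacent_intervals (hwf.mono_set sub_left)
      (hwf.mono_set sub_right)] at hwpos ⊢
  refine div_add_le_div_add_of_mul_le ?_ hwpos hpos
  have left_le : ∫ x in a..b, w x * f x ≤ w b * ∫ x in a..b, f x := by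
    rw [← intervalIntegral.integral_const_mul]
    refine intervalIntegral.integral_mono_on hab (hwf.mono_set sub_left)
      ((hf.mono_set sub_left).const_mul _) fun x hx => ?_
    have hx' : x ∈ Set.Icc a c := ⟨hx.1, hx.2.trans hbc⟩
    exact mul_le_mul_of_nonneg_right (hw hx' hb hx.2) (hf₀ x hx')
  have le_right : w b * ∫ x in b..c, f x ≤ ∫ x in b..c, w x * f x := by
    rw [← intervalIntegral.integral_const_mul]
    refine intervalIntegral.integral_mono_on hbc ((hf.mono_set sub_right).const_mul _)
      (hwf.mono_set sub_right) fun x hx => ?_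
    have hx' : x ∈ Set.Icc a c := ⟨hab.trans hx.1, hx.2⟩
    exact mul_le_mul_of_nonneg_right (hw hb hx' hx.1) (hf₀ x hx')
  have left_nonneg : 0 ≤ ∫ x in a..b, f x :=
    intervalIntegral.integral_nonneg hab fun x hx => hf₀ x ⟨hx.1, hx.2.trans hbc⟩
  have right_nonneg : 0 ≤ ∫ x in b..c, f x :=
    intervalIntegral.integral_nonneg hbc fun x hx => hf₀ x ⟨hab.trans hx.1, hx.2⟩
  calc (∫ x in a..b, w x * f x) * ∫ x in b..c, f x
      ≤ (w b * ∫ x in a..b, f x) * ∫ x in b..c, f x := by gcongr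
    _ = (∫ x in a..b, f x) * (w b * ∫ x in b..c, f x) := by ring
    _ ≤ (∫ x in a..b, f x) * ∫ x in b..c, w x * f x := by gcongr

theorem gammaDens_succ (k : ℕ) (r : ℝ) :
    gammaDens (k + 1) r = r / ((k : ℝ) + 1) * gammaDens k r := by
  simp only [gammaDens, Nat.factorial_succ]
  push_cast
  field_simp
  ring

theorem continuous_gammaDens (k : ℕ) : Continuous (gammaDens k) := by
  unfold gammaDens
  fun_prop

theorem gammaDens_nonneg (k : ℕ) {r : ℝ} (hr : 0 ≤ r) : 0 ≤ gammaDens k r := by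
  unfold gammaDens
  positivity

theorem gammaDens_pos (k : ℕ) {r : ℝ} (hr : 0 < r) : 0 < gammaDens k r := by
  unfold gammaDens
  positivity

theorem integral_gammaDens_pos (k : ℕ) {a b : ℝ} (ha : 0 ≤ a) (hab : a < b) :
    0 < ∫ r in a..b, gammaDens k r :=
  intervalIntegral.intervalIntegral_pos_of_pos_on ((continuous_gammaDens k).intervalIntegrable _ _)
    (fun _ hx => gammaDens_pos k (ha.trans_lt hx.1)) hab

theorem stmt_2 (k : ℕ) (s T t : ℝ) (hs : 0 ≤ s) (hT : 0 < T) (ht0 : 0 ≤ t) (htT : t ≤ T) :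
    (∫ r in s..(s + t), gammaDens (k + 1) r) / (∫ r in s..(s + T), gammaDens (k + 1) r) ≤
      (∫ r in s..(s + t), gammaDens k r) / (∫ r in s..(s + T), gammaDens k r) := by
  have hsT : s < s + T := by linarith
  have hweight : MonotoneOn (fun r : ℝ => r / ((k : ℝ) + 1)) (Set.Icc s (s + T)) :=
    fun _ _ _ _ hxy => div_le_div_of_nonneg_right hxy (by positivity)
  have hsucc : gammaDens (k + 1) = fun r => r / ((k : ℝ) + 1) * gammaDens k r :=
    funext (gammaDens_succ k)
  have hsucc_pos := integral_gammaDens_pos (k + 1) hs hsT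
  rw [hsucc] at hsucc_pos ⊢
  exact intervalIntegral_mul_div_le_of_monotoneOn (by linarith) (by linarith)
    ((continuous_gammaDens k).intervalIntegrable _ _)
    (((continuous_id.div_const _).mul (continuous_gammaDens k)).intervalIntegrable _ _)
    (fun _ hx => gammaDens_nonneg k (hs.trans hx.1)) hweight (integral_gammaDens_pos k hs hsT)
    hsucc_pos
end

section
/- Fix integers M > 1 and 1 ≤ A < M and real R > 0, and set 𝒜̄ = {0, 1, …, A−1}. Let C_n ⊆ [0, πR²] denote the n-th iterate of the Cantor set with base M and alphabet 𝒜̄ scaled to [0, πR²], i.e. C_0 = [0, πR²] and C_{n+1} is obtained by keeping, in each interval of C_n, the first A of its M equal subdivisions. Then the eigenvalue λ_0(n) = ∫_{C_n} e^{-r} dr satisfies λ_0(n) = (1 − e^{−M^{−n} πR²}) · ∏_{j=1}^{n} (1 − e^{−A·M^{−j} πR²})/(1 − e^{−M^{−j} πR²}). -/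
open MeasureTheory Finset

/-- Discrete `n`-iterate Cantor set with base `M` and alphabet `S`. -/
def cantorD (M : ℕ) (S : Finset ℕ) (n : ℕ) : Set ℕ :=
  {x | ∃ a : Fin n → ℕ, (∀ j, a j ∈ S) ∧ x = ∑ j, a j * M ^ (j : ℕ)}

/-- Continuous `n`-iterate Cantor set with base `M`, alphabet `S`, based in `[0, L]`. -/
def cantorC (M : ℕ) (S : Finset ℕ) (L : ℝ) (n : ℕ) : Set ℝ :=
  ⋃ x ∈ cantorD M S n, Set.Icc (L / M ^ n * x) (L / M ^ n * x + L / M ^ n)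

lemma sum_digits_lt {M : ℕ} (hM : 0 < M) :
    ∀ (n : ℕ) (a : Fin n → ℕ), (∀ j, a j < M) → ∑ j, a j * M ^ (j : ℕ) < M ^ n := by
  intro n
  induction n with
  | zero => intro a _; simp
  | succ n ih =>
      intro a ha
      rw [Fin.sum_univ_castSucc]
      have h1 : ∑ j : Fin n, a j.castSucc * M ^ (j : ℕ) < M ^ n :=
        ih (fun j => a j.castSucc) (fun j => ha _)
      have h2 : a (Fin.last n) < M := ha _
      calc (∑ j : Fin n, a j.castSucc * M ^ (j : ℕ)) + a (Fin.last n) * M ^ n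
          < M ^ n + a (Fin.last n) * M ^ n := by omega
        _ = (a (Fin.last n) + 1) * M ^ n := by ring
        _ ≤ M * M ^ n := Nat.mul_le_mul_right _ h2
        _ = M ^ (n + 1) := by ring

lemma cantorC_subset {M A : ℕ} (hM : 0 < M) (hAM : A ≤ M) {L : ℝ} (hL : 0 ≤ L) (n : ℕ) :
    cantorC M (Finset.range A) L n ⊆ Set.Icc 0 L := by
  intro r hr
  simp only [cantorC, Set.mem_iUnion] at hr
  obtain ⟨x, hx, hr⟩ := hr
  have hxlt : x < M ^ n := by
    obtain ⟨a, ha, rfl⟩ := hx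
    exact sum_digits_lt hM n a (fun j => lt_of_lt_of_le (Finset.mem_range.mp (ha j)) hAM)
  have hMn : (0:ℝ) < (M:ℝ) ^ n := by positivity
  have hnn : (0:ℝ) ≤ L / M ^ n := by positivity
  constructor
  · have : (0:ℝ) ≤ L / M ^ n * x := by positivity
    linarith [hr.1]
  · have h1 : L / M ^ n * x + L / M ^ n = L / M ^ n * (x + 1) := by ring
    have h2 : (x:ℝ) + 1 ≤ (M:ℝ) ^ n := by
      have : (x:ℝ) + 1 ≤ ((M ^ n : ℕ) : ℝ) := by exact_mod_cast Nat.succ_le_of_lt hxlt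
      simpa using this
    have h3 : L / M ^ n * ((x:ℝ) + 1) ≤ L / M ^ n * (M:ℝ) ^ n :=
      mul_le_mul_of_nonneg_left h2 hnn
    have h4 : L / M ^ n * (M:ℝ) ^ n = L := by field_simp
    calc r ≤ L / M ^ n * x + L / M ^ n := hr.2
      _ = L / M ^ n * ((x:ℝ) + 1) := h1
      _ ≤ L / M ^ n * (M:ℝ) ^ n := h3
      _ = L := h4

lemma cantorC_measurable (M : ℕ) (S : Finset ℕ) (L : ℝ) (n : ℕ) :
    MeasurableSet (cantorC M S L n) :=
  MeasurableSet.biUnion (Set.to_countable _) (fun _ _ => measurableSet_Icc)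

lemma cantorC_succ (M : ℕ) (hM : 0 < M) (S : Finset ℕ) (L : ℝ) (n : ℕ) :
    cantorC M S L (n + 1) =
      ⋃ a ∈ S, (fun t => (a : ℝ) * (L / M) + t) '' cantorC M S (L / M) n := by
  have hM0 : (M:ℝ) ≠ 0 := Nat.cast_ne_zero.mpr hM.ne'
  ext r
  simp only [cantorC, cantorD, Set.mem_iUnion, Set.mem_image, Set.mem_setOf_eq]
  constructor
  · rintro ⟨x, ⟨a, ha, rfl⟩, hr⟩
    refine ⟨a (Fin.last n), ha _, r - (a (Fin.last n) : ℝ) * (L / M), ?_, by ring⟩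
    refine ⟨∑ j : Fin n, a j.castSucc * M ^ (j:ℕ), ⟨fun j => a j.castSucc, fun j => ha _, rfl⟩, ?_⟩
    rw [Fin.sum_univ_castSucc] at hr
    simp only [Fin.coe_castSucc, Fin.val_last] at hr
    have key : ∀ y c : ℕ,
        L / M ^ (n+1) * ((y + c * M ^ n : ℕ) : ℝ) = L / M / M ^ n * y + (c:ℝ) * (L / M) := by
      intro y c
      push_cast
      rw [pow_succ]
      field_simp
    constructor
    · have := hr.1
      rw [key] at this
      linarith
    · have h2 := hr.2
      rw [key] at h2
      have : L / M ^ (n+1) = L / M / M ^ n := by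
        rw [pow_succ, div_div, mul_comm]
      rw [this] at h2
      linarith
  · rintro ⟨c, hc, t, ⟨y, ⟨b, hb, rfl⟩, ht⟩, rfl⟩
    refine ⟨(∑ j : Fin n, b j * M ^ (j:ℕ)) + c * M ^ n,
      ⟨Fin.snoc b c, ?_, ?_⟩, ?_⟩
    · intro j
      refine Fin.lastCases ?_ ?_ j
      · simp [hc]
      · intro i; simpa using hb i
    · rw [Fin.sum_univ_castSucc]
      simp
    · have key : L / M ^ (n+1) * (((∑ j : Fin n, b j * M ^ (j:ℕ)) + c * M ^ n : ℕ) : ℝ)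
          = L / M / M ^ n * ((∑ j : Fin n, b j * M ^ (j:ℕ) : ℕ) : ℝ) + (c:ℝ) * (L / M) := by
        push_cast
        rw [pow_succ]
        field_simp
      have hlen : L / M ^ (n+1) = L / M / M ^ n := by
        rw [pow_succ, div_div, mul_comm]
      rw [key, hlen]
      constructor
      · linarith [ht.1]
      · linarith [ht.2]

lemma integral_exp_shift (c : ℝ) (s : Set ℝ) (hs : MeasurableSet s) :
    ∫ r in (fun t => c + t) '' s, Real.exp (-r) =
      Real.exp (-c) * ∫ t in s, Real.exp (-t) := by
  have hs' : MeasurableSet ((fun t => c + t) '' s) := by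
    have : (fun t => c + t) '' s = (fun r => r - c) ⁻¹' s := by
      ext r
      simp only [Set.mem_image, Set.mem_preimage]
      constructor
      · rintro ⟨t, ht, rfl⟩; simpa using ht
      · intro h; exact ⟨r - c, h, by ring⟩
    rw [this]
    exact hs.preimage (measurable_id.sub_const c)
  have heq : ∀ r : ℝ, Set.indicator ((fun t => c + t) '' s) (fun r => Real.exp (-r)) r
      = Set.indicator s (fun t => Real.exp (-c) * Real.exp (-t)) (r - c) := by
    intro r
    by_cases h : r - c ∈ s
    · have h1 : r ∈ (fun t => c + t) '' s := ⟨r - c, h, by ring⟩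
      rw [Set.indicator_of_mem h1, Set.indicator_of_mem h, ← Real.exp_add]
      ring_nf
    · have h1 : r ∉ (fun t => c + t) '' s := by
        rintro ⟨t, ht, rfl⟩
        exact h (by simpa using ht)
      rw [Set.indicator_of_notMem h1, Set.indicator_of_notMem h]
  have h3 : (fun r => Set.indicator s (fun t => Real.exp (-c) * Real.exp (-t)) r)
      = fun r => Real.exp (-c) * Set.indicator s (fun t => Real.exp (-t)) r := by
    ext r; by_cases h : r ∈ s <;> simp [h]
  rw [← integral_indicator hs', integral_congr_ae (Filter.Eventually.of_forall heq),
    integral_sub_right_eq_self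
      (fun r => Set.indicator s (fun t => Real.exp (-c) * Real.exp (-t)) r) c,
    h3, integral_const_mul, integral_indicator hs]

lemma prod_Icc_one_succ (f : ℕ → ℝ) (n : ℕ) :
    (∏ j ∈ Finset.Icc 1 (n+1), f j) = f 1 * ∏ j ∈ Finset.Icc 1 n, f (j+1) := by
  induction n with
  | zero => simp
  | succ n ih =>
      rw [Finset.prod_Icc_succ_top (by omega) f, ih,
        Finset.prod_Icc_succ_top (by omega) (fun j => f (j+1)), mul_assoc]

set_option maxHeartbeats 1000000 in
lemma cantor_integral (M A : ℕ) (hM : 1 < M) (hA1 : 1 ≤ A) (hAM : A < M) :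
    ∀ (n : ℕ) (L : ℝ), 0 < L →
      (∫ r in cantorC M (Finset.range A) L n, Real.exp (-r)) =
        (1 - Real.exp (-L / M ^ n)) *
          ∏ j ∈ Finset.Icc 1 n,
            (1 - Real.exp (-(A : ℝ) * L / M ^ j)) / (1 - Real.exp (-L / M ^ j)) := by
  intro n
  induction n with
  | zero =>
      intro L hL
      have h0 : cantorC M (Finset.range A) L 0 = Set.Icc 0 L := by
        ext r
        simp only [cantorC, cantorD, Set.mem_iUnion, Set.mem_setOf_eq]
        constructor
        · rintro ⟨x, ⟨a, ha, rfl⟩, hr⟩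
          simpa using hr
        · intro hr
          exact ⟨0, ⟨Fin.elim0, fun j => j.elim0, by simp⟩, by simpa using hr⟩
      rw [h0, MeasureTheory.integral_Icc_eq_integral_Ioc,
        ← intervalIntegral.integral_of_le hL.le]
      have hInt : (∫ x in (0:ℝ)..L, Real.exp (-x)) = 1 - Real.exp (-L) := by
        rw [intervalIntegral.integral_comp_neg fun x => Real.exp x, integral_exp]
        simp
      rw [hInt, Finset.Icc_eq_empty (by omega), Finset.prod_empty]
      simp [neg_div]
  | succ n ih =>
      intro L hL
      have hMpos : 0 < M := by omega
      have hM0 : (0:ℝ) < (M:ℝ) := by exact_mod_cast hMpos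
      have hM0' : (M:ℝ) ≠ 0 := hM0.ne'
      have hLM : 0 < L / M := div_pos hL hM0
      set C := cantorC M (Finset.range A) (L / M) n with hC
      have hCm : MeasurableSet C := cantorC_measurable _ _ _ _
      have hCsub : C ⊆ Set.Icc 0 (L / M) := cantorC_subset hMpos hAM.le hLM.le n
      set T : ℕ → Set ℝ := fun a => (fun t => (a:ℝ) * (L / M) + t) '' C with hT
      have hTm : ∀ a : ℕ, MeasurableSet (T a) := by
        intro a
        have h1 : T a = (fun r => r - (a:ℝ) * (L / M)) ⁻¹' C := by
          ext r
          simp only [hT, Set.mem_image, Set.mem_preimage]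
          constructor
          · rintro ⟨t, ht, rfl⟩; simpa using ht
          · intro h; exact ⟨r - (a:ℝ) * (L / M), h, by ring⟩
        rw [h1]; exact hCm.preimage (measurable_id.sub_const _)
      have hTsub : ∀ a : ℕ, T a ⊆ Set.Icc ((a:ℝ) * (L/M)) ((a:ℝ) * (L/M) + L/M) := by
        intro a r hr
        obtain ⟨t, ht, rfl⟩ := hr
        have h2 := hCsub ht
        exact ⟨by linarith [h2.1], by linarith [h2.2]⟩
      have hsucc : cantorC M (Finset.range A) L (n+1) = ⋃ i : Fin A, T i := by
        rw [cantorC_succ M hMpos (Finset.range A) L n]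
        ext r
        simp only [Set.mem_iUnion, Finset.mem_range]
        constructor
        · rintro ⟨a, ha, h⟩; exact ⟨⟨a, ha⟩, h⟩
        · rintro ⟨⟨a, ha⟩, h⟩; exact ⟨a, ha, h⟩
      have hdis0 : ∀ a b : ℕ, a < b → volume (T a ∩ T b) = 0 := by
        intro a b hab
        have hsub : T a ∩ T b ⊆ Set.Icc ((b:ℝ)*(L/M)) ((a:ℝ)*(L/M) + L/M) := by
          rintro r ⟨h1, h2⟩
          exact ⟨(hTsub b h2).1, (hTsub a h1).2⟩
        refine measure_mono_null hsub ?_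
        rw [Real.volume_Icc]
        apply ENNReal.ofReal_eq_zero.mpr
        have hab' : (a:ℝ) + 1 ≤ (b:ℝ) := by exact_mod_cast hab
        nlinarith [hLM.le]
      have hd : Pairwise (Function.onFun (AEDisjoint volume) (fun i : Fin A => T i)) := by
        intro i j hij
        have hne : (i:ℕ) ≠ (j:ℕ) := fun h => hij (Fin.ext h)
        rcases hne.lt_or_gt with h | h
        · exact hdis0 _ _ h
        · show volume (T i ∩ T j) = 0
          rw [Set.inter_comm]
          exact hdis0 _ _ h
      have hfi : IntegrableOn (fun r => Real.exp (-r)) (⋃ i : Fin A, T i) volume := by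
        have hsub : (⋃ i : Fin A, T i) ⊆ Set.Icc 0 L := by
          rw [← hsucc]; exact cantorC_subset hMpos hAM.le hL.le (n+1)
        exact ((Real.continuous_exp.comp continuous_neg).integrableOn_Icc).mono_set hsub
      have hiu := integral_iUnion_ae (μ := volume) (s := fun i : Fin A => T i)
        (f := fun r => Real.exp (-r)) (fun i => (hTm i).nullMeasurableSet) hd hfi
      rw [hsucc, hiu, tsum_fintype]
      have hshift : ∀ i : Fin A, (∫ r in T i, Real.exp (-r))
          = Real.exp (-(((i:ℕ):ℝ) * (L/M))) * ∫ t in C, Real.exp (-t) :=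
        fun i => integral_exp_shift (((i:ℕ):ℝ) * (L/M)) C hCm
      rw [Finset.sum_congr rfl (fun i _ => hshift i), ← Finset.sum_mul]
      -- geometric sum
      have hne1 : Real.exp (-(L/M)) ≠ 1 := by
        rw [Ne, Real.exp_eq_one_iff]
        intro h
        linarith
      have hgeo : (∑ i : Fin A, Real.exp (-(((i:ℕ):ℝ) * (L/M))))
          = (1 - Real.exp (-(A:ℝ) * L / M ^ 1)) / (1 - Real.exp (-L / M ^ 1)) := by
        rw [Fin.sum_univ_eq_sum_range (fun a => Real.exp (-((a:ℝ) * (L/M))))]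
        have hpow : ∀ a : ℕ, Real.exp (-((a:ℝ) * (L/M))) = (Real.exp (-(L/M)))^a := by
          intro a
          rw [← Real.exp_nat_mul]
          ring_nf
        rw [Finset.sum_congr rfl (fun a _ => hpow a), geom_sum_eq hne1]
        rw [← Real.exp_nat_mul]
        have e1 : (A:ℝ) * -(L/M) = -(A:ℝ) * L / M ^ 1 := by
          rw [pow_one]; ring
        have e2 : -(L/M) = -L / M ^ 1 := by rw [pow_one]; ring
        rw [e1, e2, ← neg_div_neg_eq, neg_sub, neg_sub]
      rw [hgeo, ih (L/M) hLM]
      have eL : ∀ j : ℕ, -(L/M) / (M:ℝ)^j = -L / (M:ℝ)^(j+1) := by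
        intro j
        rw [← neg_div, div_div, ← pow_succ']
      have eA : ∀ j : ℕ, -(A:ℝ) * (L/M) / (M:ℝ)^j = -(A:ℝ) * L / (M:ℝ)^(j+1) := by
        intro j
        rw [← mul_div_assoc, div_div, ← pow_succ']
      rw [eL n]
      have hprod1 : (∏ j ∈ Finset.Icc 1 n,
            (1 - Real.exp (-(A:ℝ) * (L/M) / (M:ℝ)^j)) / (1 - Real.exp (-(L/M) / (M:ℝ)^j)))
          = ∏ j ∈ Finset.Icc 1 n,
            (1 - Real.exp (-(A:ℝ) * L / (M:ℝ)^(j+1))) / (1 - Real.exp (-L / (M:ℝ)^(j+1))) :=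
        Finset.prod_congr rfl (fun j _ => by rw [eA j, eL j])
      rw [hprod1, prod_Icc_one_succ
        (fun j => (1 - Real.exp (-(A:ℝ) * L / (M:ℝ)^j)) / (1 - Real.exp (-L / (M:ℝ)^j))) n]
      ring

theorem stmt_4 (M A : ℕ) (hM : 1 < M) (hA1 : 1 ≤ A) (hAM : A < M)
    (R : ℝ) (hR : 0 < R) (n : ℕ) :
    (∫ r in cantorC M (Finset.range A) (Real.pi * R ^ 2) n, Real.exp (-r)) =
      (1 - Real.exp (-(Real.pi * R ^ 2) / M ^ n)) *
        ∏ j ∈ Finset.Icc 1 n,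
          (1 - Real.exp (-(A : ℝ) * (Real.pi * R ^ 2) / M ^ j)) /
            (1 - Real.exp (-(Real.pi * R ^ 2) / M ^ j)) := by
  have hL : 0 < Real.pi * R ^ 2 := by positivity
  exact cantor_integral M A hM hA1 hAM n (Real.pi * R ^ 2) hL
end

section
/- Fix integers M > 1 and 1 ≤ A < M, a real R > 0, and an arbitrary alphabet 𝒜 ⊆ {0,…,M−1} with |𝒜| = A. With C_n(πR², M, 𝒜) the n-iterate Cantor set based in [0, πR²], the first eigenvalue λ_0(n) = ∫_{C_n(πR²,M,𝒜)} e^{-r} dr satisfies λ_0(n) = (1 − e^{−M^{−n} πR²}) · ∏_{j=1}^{n} Σ_{a ∈ 𝒜} e^{−a·M^{−j} πR²}. -/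
open MeasureTheory Finset

/-
Up to finitely many endpoints, `C_n(L, M, 𝒜)` is the disjoint union of the intervals
`(h x, h x + h]`, where `h = L M⁻ⁿ` and `x` runs over the digit set `C_n^{(d)}`; hence the
integral of `e^{-r}` over it is `(1 - e^{-h}) ∑_x q^x` with `q = e^{-h}`. Digits below `M` give
unique base-`M` expansions, so this generating function factors as
`∏_{j<n} ∑_{a ∈ 𝒜} q^{a Mʲ}`, and `q^{a M^{n-j}} = e^{-a L M^{-j}}`.
-/

open Function

theorem digitSum_injOn (M n : ℕ) :
    Set.InjOn (fun a : Fin n → ℕ => ∑ j, a j * M ^ (j : ℕ)) {a | ∀ j, a j < M} := by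
  intro a ha b hb hab
  have hfin := (finFunctionFinEquiv (m := M) (n := n)).injective
    (a₁ := fun j => ⟨a j, ha j⟩) (a₂ := fun j => ⟨b j, hb j⟩)
    (Fin.ext (by simpa only [finFunctionFinEquiv_apply] using hab))
  funext j
  exact congrArg Fin.val (congrFun hfin j)

def cantorDigits (M : ℕ) (S : Finset ℕ) (n : ℕ) : Finset ℕ :=
  (Fintype.piFinset fun _ : Fin n => S).image fun a : Fin n → ℕ => ∑ j, a j * M ^ (j : ℕ)

theorem coe_cantorDigits (M : ℕ) (S : Finset ℕ) (n : ℕ) :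
    (cantorDigits M S n : Set ℕ) = cantorD M S n := by
  ext x
  simp [cantorDigits, cantorD, eq_comm]

theorem sum_cantorDigits_pow {R : Type*} [CommSemiring R] {M : ℕ} {S : Finset ℕ}
    (hS : S ⊆ range M) (n : ℕ) (q : R) :
    ∑ x ∈ cantorDigits M S n, q ^ x = ∏ j : Fin n, ∑ a ∈ S, q ^ (a * M ^ (j : ℕ)) := by
  rw [cantorDigits, sum_image, prod_univ_sum]
  · simp_rw [prod_pow_eq_pow_sum]
  · intro a ha b hb hab
    refine digitSum_injOn M n (fun j => ?_) (fun j => ?_) hab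
    · simpa using hS (Fintype.mem_piFinset.mp ha j)
    · simpa using hS (Fintype.mem_piFinset.mp hb j)

theorem pairwise_disjoint_Ioc_mul_natCast (h : ℝ) :
    Pairwise (Disjoint on fun x : ℕ => Set.Ioc (h * x) (h * x + h)) := by
  have := (Set.pairwise_disjoint_Ioc_add_zsmul (0 : ℝ) h).comp_of_injective Nat.cast_injective
  convert this using 3 with x
  simp only [zero_add, zsmul_eq_mul, Int.cast_add, Int.cast_natCast, Int.cast_one]
  ring_nf

theorem setIntegral_biUnion_Icc_mul_natCast {f : ℝ → ℝ} (hf : Continuous f) (h : ℝ)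
    (D : Finset ℕ) :
    ∫ r in ⋃ x ∈ D, Set.Icc (h * x) (h * x + h), f r =
      ∑ x ∈ D, ∫ r in Set.Ioc (h * x) (h * x + h), f r := by
  have hIoc : (⋃ x ∈ D, Set.Ioc (h * x) (h * x + h) : Set ℝ) =ᵐ[volume]
      ⋃ x ∈ D, Set.Icc (h * x) (h * x + h) := by
    simpa only [Finset.set_biUnion_coe] using
      Filter.EventuallyEq.biUnion D.finite_toSet fun x _ => Ioc_ae_eq_Icc
  rw [← setIntegral_congr_set hIoc]
  exact integral_biUnion_finset D (fun _ _ => measurableSet_Ioc)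
    ((pairwise_disjoint_Ioc_mul_natCast h).set_pairwise _) fun _ _ => hf.integrableOn_Ioc

theorem integral_exp_neg_Ioc_add {h : ℝ} (hh : 0 ≤ h) (a : ℝ) :
    ∫ r in Set.Ioc a (a + h), Real.exp (-r) = (1 - Real.exp (-h)) * Real.exp (-a) := by
  rw [← intervalIntegral.integral_of_le (by linarith), intervalIntegral.integral_comp_neg Real.exp,
    integral_exp, neg_add, Real.exp_add]
  ring

theorem prod_range_eq_prod_Icc_sub {β : Type*} [CommMonoid β] (f : ℕ → β) (n : ℕ) :
    ∏ j ∈ range n, f j = ∏ j ∈ Icc 1 n, f (n - j) := by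
  rw [← Finset.Ico_add_one_right_eq_Icc, prod_Ico_reflect f 1 le_rfl, Nat.add_sub_cancel,
    Nat.sub_self, Nat.Ico_zero_eq_range]

theorem exp_neg_div_pow_pow_mul {M : ℕ} (hM : M ≠ 0) (L : ℝ) {n j : ℕ} (hj : j ≤ n) (a : ℕ) :
    Real.exp (-(L / M ^ n)) ^ (a * M ^ (n - j)) = Real.exp (-(a : ℝ) * L / M ^ j) := by
  have hMn : (M : ℝ) ^ n = M ^ (n - j) * M ^ j := by rw [← pow_add, Nat.sub_add_cancel hj]
  have hM' : (M : ℝ) ≠ 0 := by exact_mod_cast hM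
  rw [← Real.exp_nat_mul, hMn]
  congr 1
  push_cast
  field_simp

theorem stmt_5_general (M : ℕ) (hM : 1 < M)
    (𝒜 : Finset ℕ) (h𝒜 : 𝒜 ⊆ Finset.range M)
    (R : ℝ) (n : ℕ) :
    (∫ r in cantorC M 𝒜 (Real.pi * R ^ 2) n, Real.exp (-r)) =
      (1 - Real.exp (-(Real.pi * R ^ 2) / M ^ n)) *
        ∏ j ∈ Finset.Icc 1 n,
          ∑ a ∈ 𝒜, Real.exp (-(a : ℝ) * (Real.pi * R ^ 2) / M ^ j) := by
  have hh : 0 ≤ Real.pi * R ^ 2 / M ^ n := by positivity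
  have hpow (x : ℕ) : Real.exp (-(Real.pi * R ^ 2 / M ^ n * x)) =
      Real.exp (-(Real.pi * R ^ 2 / M ^ n)) ^ x := by
    rw [← Real.exp_nat_mul, mul_neg, mul_comm]
  rw [cantorC, ← coe_cantorDigits, Finset.set_biUnion_coe,
    setIntegral_biUnion_Icc_mul_natCast (by fun_prop)]
  simp_rw [integral_exp_neg_Ioc_add hh, hpow]
  rw [← mul_sum, sum_cantorDigits_pow h𝒜, neg_div,
    Fin.prod_univ_eq_prod_range (fun j => ∑ a ∈ 𝒜, _ ^ (a * M ^ j)), prod_range_eq_prod_Icc_sub]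
  refine congrArg _ (prod_congr rfl fun j hj => sum_congr rfl fun a _ => ?_)
  exact exp_neg_div_pow_pow_mul (by omega) _ (mem_Icc.mp hj).2 a

theorem stmt_5 (M A : ℕ) (hM : 1 < M) (hA1 : 1 ≤ A) (hAM : A < M)
    (𝒜 : Finset ℕ) (h𝒜 : 𝒜 ⊆ Finset.range M) (hcard : 𝒜.card = A)
    (R : ℝ) (hR : 0 < R) (n : ℕ) :
    (∫ r in cantorC M 𝒜 (Real.pi * R ^ 2) n, Real.exp (-r)) =
      (1 - Real.exp (-(Real.pi * R ^ 2) / M ^ n)) *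
        ∏ j ∈ Finset.Icc 1 n,
          ∑ a ∈ 𝒜, Real.exp (-(a : ℝ) * (Real.pi * R ^ 2) / M ^ j) :=
  stmt_5_general M hM 𝒜 h𝒜 R n
end

section
/- Fix integers M > 1 and 1 ≤ A < M. There exists a constant β < ∞ such that for all y ∈ [0,1], |Σ_{j=1}^{∞} [ log(1 + y^{1/M^j} + y^{2/M^j} + ⋯ + y^{(A−1)/M^j}) − y^{1/M^j} log A ]| ≤ β. -/
/-!
Put `g x = log (1 + x + ⋯ + x ^ (A - 1)) - x * log A`. It is `O(x)` at `0` and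
`O(1 - x)` at `1`, so `|g x| ≤ 2 A² x (1 - x)` on `[0, 1]`. The points
`u j = y ^ (1 / M ^ (j + 1))` satisfy `u j = u (j + 1) ^ M ≤ u (j + 1) ^ 2`, which gives
`u j (1 - u j) ≤ 2 (u (j + 1) - u j)`: the series `∑ u j (1 - u j)` telescopes to at most `2`,
uniformly in `y`.
-/

open Finset Real

section GeomSum

variable {A : ℕ} {x : ℝ}

lemma one_le_sum_range_pow (hA : 1 ≤ A) (hx : 0 ≤ x) : 1 ≤ ∑ i ∈ range A, x ^ i := by
  simpa using single_le_sum (fun i _ => pow_nonneg hx i) (mem_range.mpr hA)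

lemma abs_log_sum_range_pow_sub_le_mul (hA : 1 ≤ A) (hx0 : 0 ≤ x) (hx1 : x ≤ 1) :
    |log (∑ i ∈ range A, x ^ i) - x * log A| ≤ A * x := by
  have hS := one_le_sum_range_pow hA hx0
  have hlogA : log A ≤ A - 1 := by
    linarith [log_le_sub_one_of_pos (show (0 : ℝ) < A by exact_mod_cast hA)]
  have hS_le : ∑ i ∈ range A, x ^ i ≤ 1 + (A - 1) * x := by
    obtain ⟨B, rfl⟩ : ∃ B, A = B + 1 := ⟨A - 1, by omega⟩
    have : ∑ i ∈ range B, x ^ (i + 1) ≤ ∑ _i ∈ range B, x :=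
      sum_le_sum fun i _ => pow_le_of_le_one hx0 hx1 (by omega)
    simp only [sum_range_succ', pow_zero, sum_const, card_range, nsmul_eq_mul] at this ⊢
    push_cast
    linarith
  have hlogS_le : log (∑ i ∈ range A, x ^ i) ≤ (A - 1) * x := by
    linarith [log_le_sub_one_of_pos (show 0 < ∑ i ∈ range A, x ^ i by linarith)]
  have hlogS_nonneg := log_nonneg hS
  rw [abs_le]
  constructor <;> nlinarith [log_nonneg (show (1 : ℝ) ≤ A by exact_mod_cast hA)]

lemma abs_log_sum_range_pow_sub_le_mul_one_sub (hA : 1 ≤ A) (hx0 : 0 ≤ x) (hx1 : x ≤ 1) :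
    |log (∑ i ∈ range A, x ^ i) - x * log A| ≤ A ^ 2 * (1 - x) := by
  set S := ∑ i ∈ range A, x ^ i
  have hS := one_le_sum_range_pow hA hx0
  have hA1 : (1 : ℝ) ≤ A := by exact_mod_cast hA
  have hS_le : S ≤ A := by
    simpa using sum_le_sum fun i (_ : i ∈ range A) => pow_le_one₀ hx0 hx1
  -- Bernoulli: `1 - x ^ i ≤ i * (1 - x) ≤ A * (1 - x)`
  have hA_sub_S : A - S ≤ A ^ 2 * (1 - x) := by
    have : ∑ _i ∈ range A, (1 : ℝ) - S ≤ ∑ _i ∈ range A, A * (1 - x) := by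
      rw [← sum_sub_distrib]
      refine sum_le_sum fun i hi => ?_
      have hi : (i : ℝ) ≤ A := by exact_mod_cast (mem_range.mp hi).le
      nlinarith [one_add_mul_sub_le_pow (show -1 ≤ x by linarith) i]
    simp only [sum_const, card_range, nsmul_eq_mul, mul_one] at this
    linarith
  have hlog_div : log (A / S) ≤ A - S := by
    calc log (A / S) ≤ A / S - 1 := log_le_sub_one_of_pos (by positivity)
      _ = (A - S) / S := by rw [div_sub_one (by positivity)]
      _ ≤ A - S := div_le_self (by linarith) hS
  rw [log_div (by positivity) (by positivity)] at hlog_div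
  have hlog_le : log S ≤ log A := log_le_log (by linarith) hS_le
  have hlogA : log A ≤ A ^ 2 :=
    (log_le_sub_one_of_pos (by linarith)).trans (by nlinarith)
  rw [abs_le]
  constructor <;> nlinarith [log_nonneg hA1, mul_le_mul_of_nonneg_left hlogA (sub_nonneg.mpr hx1)]

lemma abs_log_sum_range_pow_sub_le (hA : 1 ≤ A) (hx0 : 0 ≤ x) (hx1 : x ≤ 1) :
    |log (∑ i ∈ range A, x ^ i) - x * log A| ≤ 2 * A ^ 2 * (x * (1 - x)) := by
  have hA1 : (1 : ℝ) ≤ A := by exact_mod_cast hA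
  have hA_sq : (A : ℝ) ≤ A ^ 2 := by nlinarith
  rcases le_total x (1 / 2) with hx | hx
  · refine (abs_log_sum_range_pow_sub_le_mul hA hx0 hx1).trans ?_
    nlinarith [mul_le_mul_of_nonneg_right hA_sq hx0,
      mul_nonneg (mul_nonneg (sq_nonneg (A : ℝ)) hx0) (show (0 : ℝ) ≤ 1 - 2 * x by linarith)]
  · refine (abs_log_sum_range_pow_sub_le_mul_one_sub hA hx0 hx1).trans ?_
    nlinarith [mul_nonneg (mul_nonneg (sq_nonneg (A : ℝ)) (sub_nonneg.mpr hx1))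
      (show (0 : ℝ) ≤ 2 * x - 1 by linarith)]

end GeomSum

lemma mul_one_sub_le_two_mul_sub {a b : ℝ} (hb0 : 0 ≤ b) (hb1 : b ≤ 1)
    (hab : a ≤ b ^ 2) : a * (1 - a) ≤ 2 * (b - a) := by
  -- `t ↦ t * (3 - t)` increases on `[0, 1]`, and `b ^ 2 * (3 - b ^ 2) ≤ 2 * b`
  -- is `(b - 1) ^ 2 * (b + 2) ≥ 0`
  nlinarith [mul_nonneg (sq_nonneg (b - 1)) (show 0 ≤ b + 2 by linarith),
    mul_nonneg (sub_nonneg.mpr hab) (show 0 ≤ 3 - a - b ^ 2 by nlinarith)]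

section SquareRootGrowth

variable {u : ℕ → ℝ}

lemma sum_range_mul_one_sub_le_two (hu0 : ∀ j, 0 ≤ u j) (hu1 : ∀ j, u j ≤ 1)
    (hsq : ∀ j, u j ≤ u (j + 1) ^ 2) (n : ℕ) : ∑ j ∈ range n, u j * (1 - u j) ≤ 2 := by
  calc ∑ j ∈ range n, u j * (1 - u j) ≤ ∑ j ∈ range n, 2 * (u (j + 1) - u j) :=
        sum_le_sum fun j _ => mul_one_sub_le_two_mul_sub (hu0 _) (hu1 _) (hsq j)
    _ = 2 * (u n - u 0) := by rw [← mul_sum, sum_range_sub]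
    _ ≤ 2 := by linarith [hu1 n, hu0 0]

lemma summable_mul_one_sub (hu0 : ∀ j, 0 ≤ u j) (hu1 : ∀ j, u j ≤ 1)
    (hsq : ∀ j, u j ≤ u (j + 1) ^ 2) : Summable fun j => u j * (1 - u j) :=
  summable_of_sum_range_le (fun j => mul_nonneg (hu0 j) (sub_nonneg.mpr (hu1 j)))
    (sum_range_mul_one_sub_le_two hu0 hu1 hsq)

lemma tsum_mul_one_sub_le_two (hu0 : ∀ j, 0 ≤ u j) (hu1 : ∀ j, u j ≤ 1)
    (hsq : ∀ j, u j ≤ u (j + 1) ^ 2) : ∑' j, u j * (1 - u j) ≤ 2 :=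
  Real.tsum_le_of_sum_range_le (fun j => mul_nonneg (hu0 j) (sub_nonneg.mpr (hu1 j)))
    (sum_range_mul_one_sub_le_two hu0 hu1 hsq)

end SquareRootGrowth

lemma rpow_one_div_pow_eq_pow {y : ℝ} (hy : 0 ≤ y) {M : ℕ} (hM : 0 < M) (j : ℕ) :
    y ^ ((1 : ℝ) / M ^ j) = (y ^ ((1 : ℝ) / M ^ (j + 1))) ^ M := by
  rw [← rpow_natCast (y ^ _) M, ← rpow_mul hy]
  congr 1
  field_simp
  ring

lemma rpow_div_eq_pow {y : ℝ} (hy : 0 ≤ y) (i : ℕ) (t : ℝ) :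
    y ^ ((i : ℝ) / t) = (y ^ (1 / t)) ^ i := by
  rw [← rpow_natCast (y ^ _) i, ← rpow_mul hy, one_div_mul_eq_div]

theorem stmt_15_general (M A : ℕ) (hM : 1 < M) (hA1 : 1 ≤ A) :
    ∃ β : ℝ, ∀ y ∈ Set.Icc (0 : ℝ) 1,
      |∑' j : ℕ,
          (Real.log (∑ i ∈ Finset.range A, y ^ ((i : ℝ) / M ^ (j + 1))) -
            y ^ ((1 : ℝ) / M ^ (j + 1)) * Real.log A)| ≤ β := by
  refine ⟨4 * A ^ 2, fun y ⟨hy0, hy1⟩ => ?_⟩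
  simp_rw [rpow_div_eq_pow hy0]
  set u : ℕ → ℝ := fun j => y ^ ((1 : ℝ) / M ^ (j + 1))
  have hu0 : ∀ j, 0 ≤ u j := fun j => rpow_nonneg hy0 _
  have hu1 : ∀ j, u j ≤ 1 := fun j => rpow_le_one hy0 hy1 (by positivity)
  have hsq : ∀ j, u j ≤ u (j + 1) ^ 2 := fun j => by
    rw [show u j = u (j + 1) ^ M from rpow_one_div_pow_eq_pow hy0 (by omega) (j + 1)]
    exact pow_le_pow_of_le_one (hu0 _) (hu1 _) hM
  rw [← Real.norm_eq_abs]
  calc _ ≤ ∑' j, 2 * A ^ 2 * (u j * (1 - u j)) :=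
        tsum_of_norm_bounded ((summable_mul_one_sub hu0 hu1 hsq).mul_left _).hasSum
          fun j => abs_log_sum_range_pow_sub_le hA1 (hu0 j) (hu1 j)
    _ ≤ 2 * A ^ 2 * 2 := by
        rw [tsum_mul_left]
        gcongr
        exact tsum_mul_one_sub_le_two hu0 hu1 hsq
    _ = 4 * A ^ 2 := by ring

theorem stmt_15 (M A : ℕ) (hM : 1 < M) (hA1 : 1 ≤ A) (hAM : A < M) :
    ∃ β : ℝ, ∀ y ∈ Set.Icc (0 : ℝ) 1,
      |∑' j : ℕ,
          (Real.log (∑ i ∈ Finset.range A, y ^ ((i : ℝ) / M ^ (j + 1))) -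
            y ^ ((1 : ℝ) / M ^ (j + 1)) * Real.log A)| ≤ β :=
  stmt_15_general M A hM hA1
end

section
/- Fix an integer M > 1. There exists a constant γ < ∞ such that for every positive integer n and every x ∈ [0, M^n], |Σ_{j=1}^{n} e^{−x/M^j} − (n − log(x+1)/log M)| ≤ γ. -/
/-!
Let `k` be the integer part of `log_M x`, so `M^k ≤ x < M^(k+1)` (or `k = 0`), and note that
`log (x + 1) / log M` lies between `k` and `k + 2`. The terms with `j ≤ k` satisfy
`e^{-x/M^j} ≤ M^j / x ≤ 2^{-(k-j)}`, while those with `j > k` satisfy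
`1 - e^{-x/M^j} ≤ x / M^j ≤ 2^{-(j-k-1)}`. Both deviations therefore sum to at most `2`,
so the sum is `n - k + O(1) = n - log (x + 1) / log M + O(1)`.
-/

open Real Finset

theorem sum_half_pow_le_two_of_injOn {ι : Type*} [DecidableEq ι] {s : Finset ι} {f : ι → ℕ}
    (hf : Set.InjOn f s) : ∑ j ∈ s, (1 / 2 : ℝ) ^ f j ≤ 2 := by
  rw [← sum_image (f := fun i => (1 / 2 : ℝ) ^ i) hf]
  calc ∑ i ∈ s.image f, (1 / 2 : ℝ) ^ i
      ≤ ∑' i, (1 / 2 : ℝ) ^ i :=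
        summable_geometric_two.sum_le_tsum _ fun _ _ => by positivity
    _ = 2 := tsum_geometric_two

theorem exp_neg_le_inv {t : ℝ} (ht : 0 < t) : exp (-t) ≤ t⁻¹ := by
  rw [exp_neg]
  exact inv_anti₀ ht ((le_add_of_nonneg_right zero_le_one).trans (add_one_le_exp t))

section

variable {b x : ℝ} {j k : ℕ}

theorem pow_div_pow_le_half_pow (hb : 2 ≤ b) (hjk : j ≤ k) :
    b ^ j / b ^ k ≤ (1 / 2) ^ (k - j) := by
  have hb0 : 0 < b := by linarith
  rw [← Nat.add_sub_of_le hjk, pow_add, div_mul_cancel_left₀ (pow_pos hb0 j).ne',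
    Nat.add_sub_cancel_left, ← inv_pow, one_div]
  gcongr

theorem exp_neg_div_pow_le_half_pow (hb : 2 ≤ b) (hx : b ^ k ≤ x) (hjk : j ≤ k) :
    exp (-x / b ^ j) ≤ (1 / 2) ^ (k - j) := by
  have hbj : 0 < b ^ j := by positivity
  have hx0 : 0 < x := (pow_pos (by linarith) k).trans_le hx
  calc exp (-x / b ^ j) ≤ (x / b ^ j)⁻¹ := by
        rw [neg_div]; exact exp_neg_le_inv (div_pos hx0 hbj)
    _ = b ^ j / x := inv_div _ _
    _ ≤ b ^ j / b ^ k := div_le_div_of_nonneg_left hbj.le (by positivity) hx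
    _ ≤ (1 / 2) ^ (k - j) := pow_div_pow_le_half_pow hb hjk

theorem one_sub_exp_neg_div_pow_le_half_pow (hb : 2 ≤ b) (hx : x ≤ b ^ k) (hkj : k ≤ j) :
    1 - exp (-x / b ^ j) ≤ (1 / 2) ^ (j - k) := by
  calc 1 - exp (-x / b ^ j) ≤ x / b ^ j := by
        rw [neg_div]; linarith [one_sub_le_exp_neg (x / b ^ j)]
    _ ≤ b ^ k / b ^ j := by gcongr
    _ ≤ (1 / 2) ^ (j - k) := pow_div_pow_le_half_pow hb hkj

theorem sum_Ioc_exp_neg_div_pow_le (hb : 2 ≤ b) (hx : b ^ k ≤ x) :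
    ∑ j ∈ Ioc 0 k, exp (-x / b ^ j) ≤ 2 :=
  calc ∑ j ∈ Ioc 0 k, exp (-x / b ^ j) ≤ ∑ j ∈ Ioc 0 k, (1 / 2 : ℝ) ^ (k - j) :=
        sum_le_sum fun j hj => exp_neg_div_pow_le_half_pow hb hx (mem_Ioc.1 hj).2
    _ ≤ 2 := sum_half_pow_le_two_of_injOn fun i hi j hj h => by
        simp only [coe_Ioc, Set.mem_Ioc] at hi hj; omega

theorem sum_Ioc_one_sub_exp_neg_div_pow_le (hb : 2 ≤ b) (hx : x ≤ b ^ (k + 1)) (n : ℕ) :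
    ∑ j ∈ Ioc k n, (1 - exp (-x / b ^ j)) ≤ 2 :=
  calc ∑ j ∈ Ioc k n, (1 - exp (-x / b ^ j)) ≤ ∑ j ∈ Ioc k n, (1 / 2 : ℝ) ^ (j - (k + 1)) :=
        sum_le_sum fun j hj => one_sub_exp_neg_div_pow_le_half_pow hb hx (mem_Ioc.1 hj).1
    _ ≤ 2 := sum_half_pow_le_two_of_injOn fun i hi j hj h => by
        simp only [coe_Ioc, Set.mem_Ioc] at hi hj; omega

theorem log_add_one_div_log_mem_Icc (hb : 2 ≤ b) (hx0 : 0 ≤ x) (hkx : b ^ k ≤ x + 1)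
    (hxk : x ≤ b ^ (k + 1)) : log (x + 1) / log b ∈ Set.Icc (k : ℝ) (k + 2) := by
  have hlogb : 0 < log b := log_pos (by linarith)
  have hx2 : x + 1 ≤ b ^ (k + 2) := by
    have : 1 ≤ b ^ (k + 1) := one_le_pow₀ (by linarith)
    rw [pow_succ]; nlinarith
  rw [Set.mem_Icc, le_div_iff₀ hlogb, div_le_iff₀ hlogb, ← log_pow, ← Nat.cast_ofNat,
    ← Nat.cast_add, ← log_pow]
  exact ⟨log_le_log (by positivity) hkx, log_le_log (by linarith) hx2⟩

theorem abs_sum_exp_neg_div_pow_sub_le {n : ℕ} (hb : 2 ≤ b) (hkn : k ≤ n) (hx0 : 0 ≤ x)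
    (hkx : k = 0 ∨ b ^ k ≤ x) (hxk : x ≤ b ^ (k + 1)) :
    |∑ j ∈ Ioc 0 n, exp (-x / b ^ j) - (n - log (x + 1) / log b)| ≤ 6 := by
  have hsplit : ∑ j ∈ Ioc 0 n, exp (-x / b ^ j) = ∑ j ∈ Ioc 0 k, exp (-x / b ^ j)
      + ((n - k : ℝ) - ∑ j ∈ Ioc k n, (1 - exp (-x / b ^ j))) := by
    rw [← sum_Ioc_consecutive _ k.zero_le hkn, sum_sub_distrib, sum_const, Nat.card_Ioc,
      nsmul_one, Nat.cast_sub hkn]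
    ring
  have hhead : ∑ j ∈ Ioc 0 k, exp (-x / b ^ j) ≤ 2 := by
    rcases hkx with rfl | hkx
    · simp
    · exact sum_Ioc_exp_neg_div_pow_le hb hkx
  have hhead0 : 0 ≤ ∑ j ∈ Ioc 0 k, exp (-x / b ^ j) := sum_nonneg fun _ _ => (exp_pos _).le
  have htail0 : 0 ≤ ∑ j ∈ Ioc k n, (1 - exp (-x / b ^ j)) := sum_nonneg fun j _ => by
    have : exp (-x / b ^ j) ≤ 1 := exp_le_one_iff.2 (by rw [neg_div, neg_nonpos]; positivity)
    linarith
  have htail := sum_Ioc_one_sub_exp_neg_div_pow_le hb hxk n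
  have hkx' : b ^ k ≤ x + 1 := by
    rcases hkx with rfl | hkx
    · rw [pow_zero]; linarith
    · linarith
  have hlog := log_add_one_div_log_mem_Icc hb hx0 hkx' hxk
  rw [hsplit, abs_le]
  constructor <;> linarith [hlog.1, hlog.2]

end

theorem exists_pow_le_and_le_pow_succ {M n : ℕ} (hM : 1 < M) {x : ℝ} (hx0 : 0 ≤ x)
    (hxn : x ≤ (M : ℝ) ^ n) :
    ∃ k ≤ n, (k = 0 ∨ (M : ℝ) ^ k ≤ x) ∧ x ≤ (M : ℝ) ^ (k + 1) := by
  refine ⟨Nat.log M ⌊x⌋₊, ?_, ?_, ?_⟩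
  · calc Nat.log M ⌊x⌋₊ ≤ Nat.log M (M ^ n) :=
          Nat.log_mono_right (Nat.floor_le_of_le (by exact_mod_cast hxn))
      _ = n := Nat.log_pow hM n
  · rcases eq_or_ne ⌊x⌋₊ 0 with h | h
    · exact Or.inl (by rw [h, Nat.log_zero_right])
    · refine Or.inr ?_
      calc (M : ℝ) ^ Nat.log M ⌊x⌋₊ = ((M ^ Nat.log M ⌊x⌋₊ : ℕ) : ℝ) := by push_cast; rfl
        _ ≤ ⌊x⌋₊ := by exact_mod_cast Nat.pow_log_le_self M h
        _ ≤ x := Nat.floor_le hx0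
  · have : ⌊x⌋₊ + 1 ≤ M ^ (Nat.log M ⌊x⌋₊ + 1) := Nat.lt_pow_succ_log_self hM _
    exact (Nat.lt_floor_add_one x).le.trans (by exact_mod_cast this)

theorem stmt_16 (M : ℕ) (hM : 1 < M) :
    ∃ γ : ℝ, ∀ n : ℕ, 0 < n → ∀ x ∈ Set.Icc (0 : ℝ) ((M : ℝ) ^ n),
      |(∑ j ∈ Finset.Icc 1 n, Real.exp (-x / M ^ j)) -
          ((n : ℝ) - Real.log (x + 1) / Real.log M)| ≤ γ := by
  refine ⟨6, fun n _ x ⟨hx0, hxn⟩ => ?_⟩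
  obtain ⟨k, hkn, hkx, hxk⟩ := exists_pow_le_and_le_pow_succ hM hx0 hxn
  rw [show Finset.Icc 1 n = Finset.Ioc 0 n from Finset.Icc_add_one_left_eq_Ioc 0 n]
  exact abs_sum_exp_neg_div_pow_sub_le (by exact_mod_cast hM) hkn hx0 hkx hxk
end

section
/- Fix integers M > 1, 1 ≤ A < M, and the canonical alphabet 𝒜̄ = {0,…,A−1}. Let G_n denote the Cantor function of the n-iterate Cantor set C_n(1, M, 𝒜̄) based in [0,1], defined by G_n(x) = |C_n ∩ [0, x]| / |C_n| for x ≥ 0 and G_n(x) = 0 for x ≤ 0. Then G_n is subadditive: G_n(x + y) ≤ G_n(x) + G_n(y) for all x, y ≥ 0. -/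
/-!
Rescaling by `M ^ n` turns `cantorFun` into `Φₙ (M ^ n * x) / A ^ n`, where
`Φₙ t = cantorMass M A n t` is the length of `[0, t]` covered by the unit cells `[d, d + 1]`,
`d` running over the `A ^ n` integers below `M ^ n` whose base-`M` digits are all `< A`.
Splitting off the top digit gives `Φₙ₊₁ (q * M ^ n + ρ) = min (q * A ^ n + Φₙ ρ) (A ^ (n + 1))`
for `0 ≤ ρ < M ^ n`.

Subadditivity of `Φₙ` (no window `[t, t + s]` carries more mass than `[0, s]`) is proved by
induction on `n` together with its dual `CarryBound`: no window inside `[0, M ^ n]` carries less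
mass than the window of the same length ending at `M ^ n`. When `t = q * M ^ n + ρ` and
`s = p * M ^ n + σ` are added digit-wise, the dual inequality pays for the carry out of `ρ + σ`,
and truncation by the `min` preserves both inequalities.
-/

open MeasureTheory

/-- The Cantor function of the `n`-iterate with base `M` and alphabet `S` based in `[0,1]`,
normalized so that its total value is `1` (the measure of the `n`-iterate with alphabet of
size `A` is `(A/M)^n`). -/
noncomputable def cantorFun (M A : ℕ) (S : Finset ℕ) (n : ℕ) (x : ℝ) : ℝ :=
  if x ≤ 0 then 0
  else (volume (cantorC M S 1 n ∩ Set.Icc 0 x)).toReal * ((M : ℝ) / A) ^ n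

open Finset

noncomputable section

def unitRamp (t : ℝ) : ℝ := max (min t 1) 0

theorem unitRamp_nonneg (t : ℝ) : 0 ≤ unitRamp t := le_max_right _ _

theorem unitRamp_mono : Monotone unitRamp := fun _ _ h => max_le_max_right _ (min_le_min_right _ h)

theorem unitRamp_of_nonpos {t : ℝ} (ht : t ≤ 0) : unitRamp t = 0 := by
  simp [unitRamp, min_le_of_left_le ht]

theorem unitRamp_of_one_le {t : ℝ} (ht : 1 ≤ t) : unitRamp t = 1 := by
  simp [unitRamp, ht]

theorem unitRamp_of_mem_Icc {t : ℝ} (h0 : 0 ≤ t) (h1 : t ≤ 1) : unitRamp t = t := by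
  simp [unitRamp, h0, h1]

def NonnegSubadditive (φ : ℝ → ℝ) : Prop :=
  ∀ ⦃t s : ℝ⦄, 0 ≤ t → 0 ≤ s → φ (t + s) ≤ φ t + φ s

def CarryBound (φ : ℝ → ℝ) (N c : ℝ) : Prop :=
  ∀ ⦃t s : ℝ⦄, 0 ≤ t → t < N → 0 ≤ s → s < N → N ≤ t + s → c + φ (t + s - N) ≤ φ t + φ s

theorem nonnegSubadditive_unitRamp : NonnegSubadditive unitRamp := by
  intro t s ht hs
  simp only [unitRamp, max_def, min_def]
  split_ifs <;> linarith

theorem carryBound_unitRamp : CarryBound unitRamp 1 1 := by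
  intro t s ht ht1 hs hs1 hts
  rw [unitRamp_of_mem_Icc ht ht1.le, unitRamp_of_mem_Icc hs hs1.le,
    unitRamp_of_mem_Icc (by linarith) (by linarith)]
  linarith

theorem exists_nat_mul_add {N : ℝ} (hN : 0 < N) {t : ℝ} (ht : 0 ≤ t) :
    ∃ (q : ℕ) (ρ : ℝ), 0 ≤ ρ ∧ ρ < N ∧ t = q * N + ρ := by
  refine ⟨⌊t / N⌋₊, t - ⌊t / N⌋₊ * N, ?_, ?_, by ring⟩
  · have := Nat.floor_le (div_nonneg ht hN.le)
    rw [le_div_iff₀ hN] at this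
    linarith
  · have := Nat.lt_floor_add_one (t / N)
    rw [div_lt_iff₀ hN] at this
    linarith

theorem min_add_le_min_add_min {x y C : ℝ} (hx : 0 ≤ x) (hy : 0 ≤ y) (hC : 0 ≤ C) :
    min (x + y) C ≤ min x C + min y C := by
  simp only [min_def]
  split_ifs <;> linarith

theorem add_le_min_add_min {m x y C : ℝ} (hmx : m ≤ min x C) (hmy : m ≤ min y C)
    (hm : m + C ≤ x + y) : C + m ≤ min x C + min y C := by
  simp only [min_def] at *
  split_ifs at * <;> linarith

section Step

variable {φ ψ : ℝ → ℝ} {N c : ℝ} {A M : ℕ}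

theorem exists_add_eq_carry (hsub : NonnegSubadditive φ) (hcarry : CarryBound φ N c) {ρ σ : ℝ}
    (hρ0 : 0 ≤ ρ) (hρN : ρ < N) (hσ0 : 0 ≤ σ) (hσN : σ < N) :
    ∃ (j : ℕ) (w : ℝ), 0 ≤ w ∧ w < N ∧ ρ + σ = j * N + w ∧ j * c + φ w ≤ φ ρ + φ σ := by
  rcases lt_or_ge (ρ + σ) N with h | h
  · exact ⟨0, ρ + σ, by positivity, h, by simp, by simpa using hsub hρ0 hσ0⟩
  · exact ⟨1, ρ + σ - N, by linarith, by linarith, by ring,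
      by simpa [add_comm] using hcarry hρ0 hρN hσ0 hσN h⟩

theorem NonnegSubadditive.step (hN : 0 < N) (hc : 0 ≤ c) (hφ0 : ∀ t, 0 ≤ φ t)
    (hψ : ∀ (q : ℕ) (ρ : ℝ), 0 ≤ ρ → ρ < N → ψ (q * N + ρ) = min (q * c + φ ρ) (A * c))
    (hsub : NonnegSubadditive φ) (hcarry : CarryBound φ N c) : NonnegSubadditive ψ := by
  intro t s ht hs
  obtain ⟨q, ρ, hρ0, hρN, rfl⟩ := exists_nat_mul_add hN ht
  obtain ⟨p, σ, hσ0, hσN, rfl⟩ := exists_nat_mul_add hN hs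
  obtain ⟨j, w, hw0, hwN, hρσ, hj⟩ := exists_add_eq_carry hsub hcarry hρ0 hρN hσ0 hσN
  rw [hψ q ρ hρ0 hρN, hψ p σ hσ0 hσN,
    show q * N + ρ + (p * N + σ) = ((q + p + j : ℕ) : ℝ) * N + w by push_cast; linarith,
    hψ _ w hw0 hwN]
  refine (min_le_min_right _ ?_).trans (min_add_le_min_add_min (add_nonneg (by positivity) (hφ0 ρ))
    (add_nonneg (by positivity) (hφ0 σ)) (by positivity))
  push_cast
  linarith

theorem CarryBound.step (hN : 0 < N) (hc : 0 ≤ c) (hAM : A ≤ M) (hψm : Monotone ψ)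
    (hψ : ∀ (q : ℕ) (ρ : ℝ), 0 ≤ ρ → ρ < N → ψ (q * N + ρ) = min (q * c + φ ρ) (A * c))
    (hsub : NonnegSubadditive φ) (hcarry : CarryBound φ N c) : CarryBound ψ (M * N) (A * c) := by
  intro t s ht htN hs hsN hts
  have hle_t : ψ (t + s - M * N) ≤ ψ t := hψm (by linarith)
  have hle_s : ψ (t + s - M * N) ≤ ψ s := hψm (by linarith)
  obtain ⟨q, ρ, hρ0, hρN, rfl⟩ := exists_nat_mul_add hN ht
  obtain ⟨p, σ, hσ0, hσN, rfl⟩ := exists_nat_mul_add hN hs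
  obtain ⟨j, w, hw0, hwN, hρσ, hj⟩ := exists_add_eq_carry hsub hcarry hρ0 hρN hσ0 hσN
  obtain ⟨k, hk⟩ : ∃ k, q + p + j = M + k := Nat.exists_eq_add_of_le <| by
    by_contra! h
    have : ((q + p + j + 1 : ℕ) : ℝ) * N ≤ M * N := by gcongr; exact_mod_cast h
    push_cast at this
    linarith
  have hk' : (q + p + j : ℝ) = M + k := by exact_mod_cast hk
  have hm : ψ (q * N + ρ + (p * N + σ) - M * N) ≤ k * c + φ w := by
    rw [show q * N + ρ + (p * N + σ) - M * N = k * N + w by linear_combination hρσ + N * hk',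
      hψ k w hw0 hwN]
    exact min_le_left _ _
  have hAc : (A : ℝ) * c ≤ M * c := by gcongr
  rw [hψ q ρ hρ0 hρN] at hle_t ⊢
  rw [hψ p σ hσ0 hσN] at hle_s ⊢
  exact add_le_min_add_min hle_t hle_s (by linear_combination hm + hAc + hj - c * hk')

end Step

def cantorDFinset (M A : ℕ) : ℕ → Finset ℕ
  | 0 => {0}
  | n + 1 => (range A ×ˢ cantorDFinset M A n).image fun p => p.2 + p.1 * M ^ n

theorem coe_cantorDFinset (M A n : ℕ) : (cantorDFinset M A n : Set ℕ) = cantorD M (range A) n := by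
  induction n with
  | zero => ext x; simp [cantorDFinset, cantorD]
  | succ n ih =>
    ext x
    rw [cantorD, Set.mem_ofPred_eq, ((Fin.snocEquiv fun _ => ℕ).symm).exists_congr_left]
    simp only [cantorDFinset, coe_image, coe_product, ih, cantorD, Set.mem_image, Set.mem_prod,
      Set.mem_ofPred_eq, Prod.exists, Equiv.symm_symm, Fin.snocEquiv_apply, Fin.sum_univ_castSucc,
      Fin.snoc_castSucc, Fin.snoc_last, Fin.forall_fin_succ', mem_coe]
    constructor
    · rintro ⟨a, _, ⟨ha, v, hv, rfl⟩, rfl⟩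
      exact ⟨a, v, ⟨hv, ha⟩, rfl⟩
    · rintro ⟨a, v, ⟨hv, ha⟩, rfl⟩
      exact ⟨a, _, ⟨ha, v, hv, rfl⟩, rfl⟩

section CantorDFinset

variable {M A : ℕ}

theorem lt_of_mem_cantorDFinset (hAM : A ≤ M) {n d : ℕ} (hd : d ∈ cantorDFinset M A n) :
    d < M ^ n := by
  induction n generalizing d with
  | zero => simp_all [cantorDFinset]
  | succ n ih =>
    simp only [cantorDFinset, mem_image, mem_product, mem_range, Prod.exists] at hd
    obtain ⟨a, d, ⟨ha, hd⟩, rfl⟩ := hd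
    calc d + a * M ^ n < M ^ n + a * M ^ n := by linarith [ih hd]
      _ = (a + 1) * M ^ n := by ring
      _ ≤ M ^ (n + 1) := by rw [pow_succ']; gcongr; omega

theorem sum_cantorDFinset_succ {β : Type*} [AddCommMonoid β] (hAM : A ≤ M) (n : ℕ) (g : ℕ → β) :
    ∑ d ∈ cantorDFinset M A (n + 1), g d =
      ∑ a ∈ range A, ∑ d ∈ cantorDFinset M A n, g (d + a * M ^ n) := by
  rw [cantorDFinset, sum_image, sum_product]
  rintro ⟨a, d⟩ had ⟨a', d'⟩ had' h
  simp only [coe_product, coe_range, Set.mem_prod, Set.mem_Iio, mem_coe] at had had' h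
  have hd := lt_of_mem_cantorDFinset hAM had.2
  have hd' := lt_of_mem_cantorDFinset hAM had'.2
  have hpos : 0 < M ^ n := pos_of_gt hd
  have hdiv := congrArg (· / M ^ n) h
  have hmod := congrArg (· % M ^ n) h
  simp only [Nat.add_mul_div_right _ _ hpos, Nat.div_eq_of_lt hd, Nat.div_eq_of_lt hd',
    Nat.add_mul_mod_self_right, Nat.mod_eq_of_lt hd, Nat.mod_eq_of_lt hd'] at hdiv hmod
  simp_all

theorem card_cantorDFinset (hAM : A ≤ M) (n : ℕ) : #(cantorDFinset M A n) = A ^ n := by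
  induction n with
  | zero => rfl
  | succ n ih =>
    rw [card_eq_sum_ones, sum_cantorDFinset_succ hAM]
    simp [ih, pow_succ, mul_comm]

end CantorDFinset

theorem sum_range_staircase (f : ℕ → ℝ) {q : ℕ} {φ c : ℝ} (hφ0 : 0 ≤ φ) (hφc : φ ≤ c)
    (hlt : ∀ a < q, f a = c) (hq : f q = φ) (hgt : ∀ a, q < a → f a = 0) (A : ℕ) :
    ∑ a ∈ range A, f a = min (q * c + φ) (A * c) := by
  have hc : 0 ≤ c := hφ0.trans hφc
  induction A with
  | zero => simpa using add_nonneg (mul_nonneg q.cast_nonneg hc) hφ0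
  | succ A ih =>
    rw [sum_range_succ, ih]
    push_cast
    rcases lt_trichotomy A q with h | rfl | h
    · have : ((A + 1 : ℕ) : ℝ) * c ≤ q * c := by gcongr; exact_mod_cast h
      push_cast at this
      rw [hlt A h, min_eq_right (by linarith), min_eq_right (by linarith)]
      ring
    · rw [hq, min_eq_right (by linarith), min_eq_left (by linarith)]
    · have : ((q + 1 : ℕ) : ℝ) * c ≤ A * c := by gcongr; exact_mod_cast h
      push_cast at this
      rw [hgt A h, min_eq_left (by linarith), min_eq_left (by linarith), add_zero]

def cantorMass (M A n : ℕ) (t : ℝ) : ℝ :=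
  ∑ d ∈ cantorDFinset M A n, unitRamp (t - d)

section CantorMass

variable {M A n : ℕ}

theorem cantorMass_zero (M A : ℕ) : cantorMass M A 0 = unitRamp := by
  ext t
  simp [cantorMass, cantorDFinset]

theorem cantorMass_nonneg (t : ℝ) : 0 ≤ cantorMass M A n t :=
  sum_nonneg fun _ _ => unitRamp_nonneg _

theorem cantorMass_mono : Monotone (cantorMass M A n) := fun _ _ h =>
  sum_le_sum fun _ _ => unitRamp_mono (by linarith)

theorem cantorMass_of_nonpos {t : ℝ} (ht : t ≤ 0) : cantorMass M A n t = 0 :=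
  sum_eq_zero fun d _ => unitRamp_of_nonpos (by linarith [d.cast_nonneg (α := ℝ)])

theorem cantorMass_of_le (hAM : A ≤ M) {t : ℝ} (ht : (M : ℝ) ^ n ≤ t) :
    cantorMass M A n t = A ^ n := by
  have hterm : ∀ d ∈ cantorDFinset M A n, unitRamp (t - d) = 1 := fun d hd => by
    have : ((d + 1 : ℕ) : ℝ) ≤ M ^ n := by exact_mod_cast lt_of_mem_cantorDFinset hAM hd
    push_cast at this
    exact unitRamp_of_one_le (by linarith)
  rw [cantorMass, sum_congr rfl hterm, sum_const, card_cantorDFinset hAM]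
  simp

theorem cantorMass_le (hAM : A ≤ M) (t : ℝ) : cantorMass M A n t ≤ A ^ n :=
  (cantorMass_mono (le_max_left t _)).trans_eq (cantorMass_of_le hAM (le_max_right _ _))

theorem cantorMass_succ (hAM : A ≤ M) (t : ℝ) :
    cantorMass M A (n + 1) t = ∑ a ∈ range A, cantorMass M A n (t - a * M ^ n) := by
  simp only [cantorMass, sum_cantorDFinset_succ hAM]
  push_cast
  simp only [sub_add_eq_sub_sub_swap]

theorem cantorMass_succ_nat_mul_add (hAM : A ≤ M) (q : ℕ) {ρ : ℝ} (hρ0 : 0 ≤ ρ)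
    (hρN : ρ ≤ M ^ n) :
    cantorMass M A (n + 1) (q * M ^ n + ρ) =
      min (q * A ^ n + cantorMass M A n ρ) (A * A ^ n) := by
  rw [cantorMass_succ hAM]
  refine sum_range_staircase _ (cantorMass_nonneg ρ) (cantorMass_le hAM ρ) (fun a ha => ?_)
    (by simp) (fun a ha => ?_) A
  · have : ((a + 1 : ℕ) : ℝ) * M ^ n ≤ q * M ^ n := by gcongr; exact_mod_cast ha
    push_cast at this
    exact cantorMass_of_le hAM (by linarith)
  · have : ((q + 1 : ℕ) : ℝ) * M ^ n ≤ a * M ^ n := by gcongr; exact_mod_cast ha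
    push_cast at this
    exact cantorMass_of_nonpos (by linarith)

theorem cantorMass_subadditive_carryBound (hM : 0 < M) (hAM : A ≤ M) (n : ℕ) :
    NonnegSubadditive (cantorMass M A n) ∧ CarryBound (cantorMass M A n) (M ^ n) (A ^ n) := by
  induction n with
  | zero =>
    rw [cantorMass_zero]
    simpa using ⟨nonnegSubadditive_unitRamp, carryBound_unitRamp⟩
  | succ n ih =>
    have hψ (q : ℕ) (ρ : ℝ) (h0 : 0 ≤ ρ) (h1 : ρ < (M : ℝ) ^ n) :=
      cantorMass_succ_nat_mul_add hAM q h0 h1.le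
    have hN : (0 : ℝ) < M ^ n := by positivity
    rw [pow_succ', pow_succ']
    exact ⟨ih.1.step hN (by positivity) cantorMass_nonneg hψ ih.2,
      ih.2.step hN (by positivity) hAM cantorMass_mono hψ ih.1⟩

end CantorMass

theorem measureReal_Icc_inter_Icc_zero {a w : ℝ} (ha : 0 ≤ a) (hw : 0 < w) (x : ℝ) :
    volume.real (Set.Icc a (a + w) ∩ Set.Icc 0 x) = w * unitRamp ((x - a) / w) := by
  rw [Set.Icc_inter_Icc, Real.volume_real_Icc, sup_eq_left.2 ha, unitRamp,
    mul_max_of_nonneg _ _ hw.le, mul_min_of_nonneg _ _ hw.le, mul_div_cancel₀ _ hw.ne', mul_zero,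
    mul_one, ← min_sub_sub_right, add_sub_cancel_left, min_comm]

theorem measureReal_biUnion_Icc_inter_Icc (D : Finset ℕ) {w : ℝ} (hw : 0 < w) (x : ℝ) :
    volume.real ((⋃ d ∈ D, Set.Icc (w * d) (w * d + w)) ∩ Set.Icc 0 x) =
      ∑ d ∈ D, w * unitRamp ((x - w * d) / w) := by
  have hgap {d d' : ℕ} (hlt : d < d') : w * d + w ≤ w * d' := by
    have : (d : ℝ) + 1 ≤ d' := by exact_mod_cast hlt
    nlinarith
  rw [Set.iUnion₂_inter, measureReal_biUnion_finset₀ ?_ ?_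
    fun _ _ => ne_top_of_le_ne_top measure_Icc_lt_top.ne (measure_mono Set.inter_subset_left)]
  · exact sum_congr rfl fun d _ => measureReal_Icc_inter_Icc_zero (by positivity) hw x
  · intro d _ d' _ hne
    refine AEDisjoint.mono ?_ Set.inter_subset_left Set.inter_subset_left
    rw [AEDisjoint, Set.Icc_inter_Icc, Real.volume_Icc, ENNReal.ofReal_eq_zero, sub_nonpos]
    rcases Nat.lt_or_gt_of_ne hne with hlt | hlt
    · exact inf_le_left.trans ((hgap hlt).trans le_sup_right)
    · exact inf_le_right.trans ((hgap hlt).trans le_sup_left)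
  · exact fun _ _ => (measurableSet_Icc.inter measurableSet_Icc).nullMeasurableSet

theorem cantorFun_eq {M : ℕ} (hM : 0 < M) (A n : ℕ) (x : ℝ) :
    cantorFun M A (range A) n x = cantorMass M A n (M ^ n * x) / A ^ n := by
  have hN : (0 : ℝ) < M ^ n := by positivity
  rw [cantorFun]
  split_ifs with hx
  · rw [cantorMass_of_nonpos (mul_nonpos_of_nonneg_of_nonpos hN.le hx), zero_div]
  · rw [← measureReal_def, cantorC, ← coe_cantorDFinset, Finset.set_biUnion_coe,
      measureReal_biUnion_Icc_inter_Icc _ (by positivity), cantorMass, ← mul_sum]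
    field_simp
    rw [div_pow]
    ring

end

theorem stmt_18_general (M A : ℕ) (hAM : A < M) (n : ℕ)
    (x y : ℝ) (hx : 0 ≤ x) (hy : 0 ≤ y) :
    cantorFun M A (Finset.range A) n (x + y) ≤
      cantorFun M A (Finset.range A) n x + cantorFun M A (Finset.range A) n y := by
  have hM : 0 < M := Nat.zero_lt_of_lt hAM
  rw [cantorFun_eq hM, cantorFun_eq hM, cantorFun_eq hM, mul_add, ← add_div]
  gcongr
  exact (cantorMass_subadditive_carryBound hM hAM.le n).1 (by positivity) (by positivity)

theorem stmt_18 (M A : ℕ) (hM : 1 < M) (hA1 : 1 ≤ A) (hAM : A < M) (n : ℕ)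
    (x y : ℝ) (hx : 0 ≤ x) (hy : 0 ≤ y) :
    cantorFun M A (Finset.range A) n (x + y) ≤
      cantorFun M A (Finset.range A) n x + cantorFun M A (Finset.range A) n y :=
  stmt_18_general M A hAM n x y hx hy
end

section
/- Fix integers M > 1 and 1 ≤ A < M, an alphabet 𝒜 ⊆ {0,…,M−1} of size A, and the canonical alphabet 𝒜̄ = {0,…,A−1}. Let G_{n,𝒜} be the Cantor function of the n-iterate C_n(1, M, 𝒜) based in [0,1] (G_{n,𝒜}(x) = |C_n(1,M,𝒜) ∩ [0,x]|·(M/A)^n). Then for all x ≤ y: G_{n,𝒜}(y) − G_{n,𝒜}(x) ≤ G_{n,𝒜̄}(y − x). -/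
open MeasureTheory

/-!
At scale `M⁻ⁿ` the set `C_n(1, M, 𝒜)` is the union of the cells `[d, d + 1] / Mⁿ` over the digit set
`D = C_n^{(d)}(M, 𝒜)`, so `t ↦ |C_n ∩ [0, t]|` is `M⁻ⁿ` times the piecewise linear interpolation, at
`Mⁿ t`, of the counting function `k ↦ #{d ∈ D | d < k}`. Interpolation preserves increment bounds of
the form `f j - f i ≤ g (j - i)`, so it suffices that every window `[i, j)` contains at most as many
points of `D` as `[0, j - i)` contains of the digit set of the canonical alphabet. This goes by
induction on `n`: splitting off the lowest digit writes the counting function of the next digit set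
as `A` times the interpolated counting function of the current one, evaluated at `P(k) / A`, where
`P(k)` counts the points of `𝒜 + Mℤ` below `k`; and `P` obeys the same window bound because any `r`
consecutive residues contain at most `min r A` elements of `𝒜`.
-/

open Finset

noncomputable def linInterp (f : ℤ → ℝ) (t : ℝ) : ℝ :=
  f ⌊t⌋ + Int.fract t * (f (⌊t⌋ + 1) - f ⌊t⌋)

section LinInterp

variable {f g : ℤ → ℝ}

theorem linInterp_intCast_add (k : ℤ) {θ : ℝ} (h₀ : 0 ≤ θ) (h₁ : θ ≤ 1) :
    linInterp f (k + θ) = f k + θ * (f (k + 1) - f k) := by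
  rcases h₁.lt_or_eq with h₁ | rfl
  · rw [linInterp, Int.floor_intCast_add, Int.fract_intCast_add,
      Int.floor_eq_zero_iff.mpr ⟨h₀, h₁⟩, Int.fract_eq_self.mpr ⟨h₀, h₁⟩, add_zero]
  · rw [linInterp, ← Int.cast_one, ← Int.cast_add, Int.floor_intCast, Int.fract_intCast]
    ring

theorem linInterp_mono (hf : Monotone f) : Monotone (linInterp f) := by
  have hbetween : ∀ t, f ⌊t⌋ ≤ linInterp f t ∧ linInterp f t ≤ f (⌊t⌋ + 1) := by
    intro t
    have hstep : 0 ≤ f (⌊t⌋ + 1) - f ⌊t⌋ := sub_nonneg.2 (hf (by omega))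
    have := Int.fract_nonneg t
    have := Int.fract_lt_one t
    constructor <;> unfold linInterp <;> nlinarith
  intro s t hst
  rcases (Int.floor_mono hst).eq_or_lt with h | h
  · have hfract : Int.fract s ≤ Int.fract t := by
      rw [Int.fract, Int.fract, h]
      linarith
    have hstep : 0 ≤ f (⌊t⌋ + 1) - f ⌊t⌋ := sub_nonneg.2 (hf (by omega))
    unfold linInterp
    rw [h]
    gcongr
  · calc linInterp f s ≤ f (⌊s⌋ + 1) := (hbetween s).2
      _ ≤ f ⌊t⌋ := hf (by omega)
      _ ≤ linInterp f t := (hbetween t).1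

theorem linInterp_sub_le (hfg : ∀ i j, f j - f i ≤ g (j - i)) (x y : ℝ) :
    linInterp f y - linInterp f x ≤ linInterp g (y - x) := by
  set u := ⌊x⌋
  set v := ⌊y⌋
  set α := Int.fract x
  set β := Int.fract y
  have hα₀ : 0 ≤ α := Int.fract_nonneg x
  have hα₁ : α < 1 := Int.fract_lt_one x
  have hβ₀ : 0 ≤ β := Int.fract_nonneg y
  have hβ₁ : β < 1 := Int.fract_lt_one y
  have hyx : y - x = ((v - u : ℤ) : ℝ) + (β - α) := by
    simp only [u, v, α, β, Int.fract]
    push_cast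
    ring
  have h₀ := hfg u v
  have h₁ := hfg (u + 1) (v + 1)
  have h₂ := hfg u (v + 1)
  have h₃ := hfg (u + 1) v
  rw [show v + 1 - (u + 1) = v - u by ring] at h₁
  rw [show v + 1 - u = v - u + 1 by ring] at h₂
  rw [show v - (u + 1) = v - u - 1 by ring] at h₃
  show f v + β * (f (v + 1) - f v) - (f u + α * (f (u + 1) - f u)) ≤ _
  -- The increment of `linInterp f` is a convex combination, with weights `min α β`, `|β - α|` and
  -- `1 - max α β`, of increments of `f` over integer windows of lengths `v - u` and `v - u ± 1`.
  rcases le_or_gt α β with hαβ | hβα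
  · rw [hyx, linInterp_intCast_add _ (by linarith) (by linarith)]
    linarith [mul_le_mul_of_nonneg_left h₁ hα₀, mul_le_mul_of_nonneg_left h₂ (sub_nonneg.2 hαβ),
      mul_le_mul_of_nonneg_left h₀ (sub_nonneg.2 hβ₁.le)]
  · rw [show y - x = ((v - u - 1 : ℤ) : ℝ) + (1 + β - α) by push_cast at hyx ⊢; linarith,
      linInterp_intCast_add _ (by linarith) (by linarith), sub_add_cancel]
    linarith [mul_le_mul_of_nonneg_left h₁ hβ₀, mul_le_mul_of_nonneg_left h₃ (sub_nonneg.2 hβα.le),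
      mul_le_mul_of_nonneg_left h₀ (sub_nonneg.2 hα₁.le)]

theorem linInterp_sum {ι : Type*} (s : Finset ι) (f : ι → ℤ → ℝ) (t : ℝ) :
    linInterp (fun k => ∑ i ∈ s, f i k) t = ∑ i ∈ s, linInterp (f i) t := by
  simp only [linInterp, ← sum_sub_distrib, mul_sum, ← sum_add_distrib]

theorem linInterp_indicator_lt (d : ℤ) (t : ℝ) :
    linInterp (fun k => if d < k then 1 else 0) t = max 0 (min 1 (t - d)) := by
  have h₀ := Int.floor_le t
  have h₁ := Int.lt_floor_add_one t
  rcases lt_trichotomy d ⌊t⌋ with h | rfl | h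
  · have : (d : ℝ) + 1 ≤ ⌊t⌋ := by exact_mod_cast h
    rw [linInterp, if_pos h, if_pos (by omega), min_eq_left (by linarith)]
    simp
  · rw [linInterp, if_neg (lt_irrefl _), if_pos (by omega), Int.fract,
      min_eq_right (by linarith), max_eq_right (by linarith)]
    ring
  · have : (⌊t⌋ : ℝ) + 1 ≤ d := by exact_mod_cast h
    rw [linInterp, if_neg (by omega), if_neg (by omega),
      max_eq_left (min_le_of_right_le (by linarith))]
    ring

end LinInterp

def countBelow (D : Finset ℕ) (k : ℤ) : ℕ := #(D.filter fun d : ℕ => (d : ℤ) < k)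

section CountBelow

variable (D : Finset ℕ)

theorem countBelow_mono : Monotone (countBelow D) := fun _ _ h =>
  card_le_card (monotone_filter_right D fun _ _ hd => lt_of_lt_of_le hd h)

theorem natCast_countBelow (k : ℤ) :
    (countBelow D k : ℝ) = ∑ d ∈ D, if (d : ℤ) < k then 1 else 0 :=
  natCast_card_filter _ _

theorem countBelow_sub_countBelow_le {b b' : ℤ} (h : b ≤ b') :
    (countBelow D b' : ℤ) - countBelow D b ≤ b' - b := by
  have hsplit : D.filter (fun d : ℕ => (d : ℤ) < b') ⊆
      D.filter (fun d : ℕ => (d : ℤ) < b) ∪ D.filter (fun d : ℕ => b ≤ d ∧ (d : ℤ) < b') := by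
    intro d hd
    simp only [mem_union, mem_filter] at hd ⊢
    exact if h' : (d : ℤ) < b then .inl ⟨hd.1, h'⟩ else .inr ⟨hd.1, by omega, hd.2⟩
  have hwindow : #(D.filter fun d : ℕ => b ≤ d ∧ (d : ℤ) < b') ≤ #(Ico b b') :=
    card_le_card_of_injOn (fun d : ℕ => (d : ℤ)) (fun d hd => by simp_all)
      (fun _ _ _ _ h => Nat.cast_injective h)
  have := (card_le_card hsplit).trans (card_union_le _ _)
  rw [Int.card_Ico] at hwindow
  unfold countBelow
  omega

theorem countBelow_range (A : ℕ) {r : ℤ} (hr : 0 ≤ r) :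
    (countBelow (range A) r : ℤ) = min r A := by
  have : (range A).filter (fun a : ℕ => (a : ℤ) < r) = range (min r.toNat A) := by
    ext a
    simp only [mem_filter, mem_range, lt_min_iff]
    omega
  rw [countBelow, this, card_range]
  omega

end CountBelow

/-- `periodicCount M S k` counts the points of `S + Mℤ` in `[0, k)` (negatively for `k < 0`). -/
def periodicCount (M : ℕ) (S : Finset ℕ) (k : ℤ) : ℤ := S.card * (k / M) + countBelow S (k % M)

theorem periodicCount_sub_le {M : ℕ} (hM : 0 < M) {S : Finset ℕ} (hS : S ⊆ range M) (i j : ℤ) :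
    periodicCount M S j - periodicCount M S i ≤ periodicCount M (range S.card) (j - i) := by
  have hM' : (0 : ℤ) < M := by exact_mod_cast hM
  have hsM : (countBelow S M : ℤ) = S.card := by
    rw [countBelow, filter_true_of_mem fun a ha => by simpa using hS ha]
  have hsA : ∀ b, (countBelow S b : ℤ) ≤ S.card := fun b => by exact_mod_cast card_filter_le _ _
  have hi := Int.emod_add_mul_ediv i M
  have hj := Int.emod_add_mul_ediv j M
  have hb₀ := Int.emod_nonneg i hM'.ne'
  have hb₁ := Int.emod_lt_of_pos i hM'
  have hb'₀ := Int.emod_nonneg j hM'.ne'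
  have hb'₁ := Int.emod_lt_of_pos j hM'
  unfold periodicCount
  rw [card_range]
  rcases le_or_gt (i % M) (j % M) with h | h
  · obtain ⟨hq, hr⟩ := (Int.ediv_emod_unique (a := j - i) hM').2
      ⟨show j % M - i % M + M * (j / M - i / M) = j - i by linarith, by omega, by omega⟩
    rw [hq, hr, countBelow_range _ (by omega), mul_sub]
    have := le_min (countBelow_sub_countBelow_le S h)
      (show (countBelow S (j % M) : ℤ) - countBelow S (i % M) ≤ S.card by
        have := hsA (j % M); omega)
    linarith
  · -- the residues met by `[i, j)` wrap around: they are `[i % M, M) ∪ [0, j % M)` plus full periods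
    obtain ⟨hq, hr⟩ := (Int.ediv_emod_unique (a := j - i) hM').2
      ⟨show M + j % M - i % M + M * (j / M - i / M - 1) = j - i by linarith, by omega, by omega⟩
    rw [hq, hr, countBelow_range _ (by omega), mul_sub, mul_sub]
    have h₁ := countBelow_sub_countBelow_le S hb₁.le
    have h₂ := countBelow_sub_countBelow_le S hb'₀
    have h₃ := countBelow_mono S h.le
    rw [hsM] at h₁
    rw [show countBelow S 0 = 0 by simp [countBelow], Nat.cast_zero, sub_zero, sub_zero] at h₂
    have := le_min
      (show S.card + (countBelow S (j % M) : ℤ) - countBelow S (i % M) ≤ M + j % M - i % M by omega)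
      (show S.card + (countBelow S (j % M) : ℤ) - countBelow S (i % M) ≤ S.card by omega)
    linarith

def digitSet (M : ℕ) (S : Finset ℕ) : ℕ → Finset ℕ
  | 0 => {0}
  | n + 1 => (S ×ˢ digitSet M S n).image fun p => p.1 + M * p.2

theorem coe_digitSet (M : ℕ) (S : Finset ℕ) (n : ℕ) :
    (digitSet M S n : Set ℕ) = cantorD M S n := by
  induction n with
  | zero => ext x; simp [digitSet, cantorD]
  | succ n ih =>
    ext x
    have hsum : ∀ v : Fin n → ℕ,
        ∑ j : Fin n, v j * (M ^ (j : ℕ) * M) = M * ∑ j, v j * M ^ (j : ℕ) := fun v => by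
      rw [mul_sum]
      exact sum_congr rfl fun j _ => by ring
    simp only [digitSet, coe_image, coe_product, ih, Set.mem_image, Set.mem_prod, cantorD,
      Set.mem_ofPred_eq, Prod.exists, Fin.exists_fin_succ_pi, Fin.forall_fin_succ, Fin.cons_zero,
      Fin.cons_succ, Fin.sum_univ_succ, Fin.val_zero, Fin.val_succ, pow_zero, mul_one, pow_succ,
      hsum]
    constructor
    · rintro ⟨a, _, ⟨ha, v, hv, rfl⟩, rfl⟩
      exact ⟨a, v, ⟨ha, hv⟩, rfl⟩
    · rintro ⟨a, v, ⟨ha, hv⟩, rfl⟩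
      exact ⟨a, _, ⟨ha, v, hv, rfl⟩, rfl⟩

theorem injOn_add_mul {M : ℕ} : Set.InjOn (fun p : ℕ × ℕ => p.1 + M * p.2) {p | p.1 < M} := by
  rintro ⟨a, d⟩ (ha : a < M) ⟨a', d'⟩ (ha' : a' < M) h
  have hmod := congrArg (· % M) h
  have hdiv := congrArg (· / M) h
  simp only [Nat.add_mul_mod_self_left, Nat.mod_eq_of_lt ha, Nat.mod_eq_of_lt ha'] at hmod
  simp only [Nat.add_mul_div_left _ _ (by omega : 0 < M), Nat.div_eq_of_lt ha,
    Nat.div_eq_of_lt ha', zero_add] at hdiv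
  exact Prod.ext hmod hdiv

theorem add_mul_lt_add_mul_iff {M a b c d : ℤ} (ha : 0 ≤ a) (haM : a < M) (hb : 0 ≤ b)
    (hbM : b < M) :
    a + M * d < b + M * c ↔ d < c ∨ d = c ∧ a < b := by
  rcases lt_trichotomy d c with h | rfl | h
  · refine iff_of_true ?_ (.inl h)
    nlinarith [mul_le_mul_of_nonneg_left (show d + 1 ≤ c by omega) (ha.trans haM.le)]
  · simp
  · refine iff_of_false (not_lt.2 ?_) (by omega)
    nlinarith [mul_le_mul_of_nonneg_left (show c + 1 ≤ d by omega) (ha.trans haM.le)]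

theorem countBelow_digitSet_succ_add_mul {M : ℕ} {S : Finset ℕ} (hS : S ⊆ range M) (n : ℕ)
    {b : ℤ} (hb : 0 ≤ b) (hbM : b < M) (c : ℤ) :
    (countBelow (digitSet M S (n + 1)) (b + M * c) : ℝ) =
      S.card * countBelow (digitSet M S n) c +
        countBelow S b * (countBelow (digitSet M S n) (c + 1) - countBelow (digitSet M S n) c) := by
  have hinj : Set.InjOn (fun p : ℕ × ℕ => p.1 + M * p.2) ↑(S ×ˢ digitSet M S n) :=
    injOn_add_mul.mono fun p hp => mem_range.1 (hS (mem_product.1 hp).1)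
  have hterm : ∀ a ∈ S, ∀ d : ℕ, (if ((a + M * d : ℕ) : ℤ) < b + M * c then 1 else 0 : ℝ) =
      (if (d : ℤ) < c then 1 else 0) + (if (a : ℤ) < b then 1 else 0) *
        ((if (d : ℤ) < c + 1 then 1 else 0) - if (d : ℤ) < c then 1 else 0) := by
    intro a ha d
    have ha := mem_range.1 (hS ha)
    simp only [Nat.cast_add, Nat.cast_mul,
      add_mul_lt_add_mul_iff (Nat.cast_nonneg a) (by exact_mod_cast ha) hb hbM]
    split_ifs <;> norm_num <;> omega
  rw [natCast_countBelow, digitSet, sum_image hinj, sum_product,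
    sum_congr rfl fun a ha => sum_congr rfl fun d _ => hterm a ha d]
  simp only [sum_add_distrib, ← mul_sum, ← sum_mul, sum_const, nsmul_eq_mul, natCast_countBelow,
    sum_sub_distrib]

theorem countBelow_digitSet_succ {M : ℕ} (hM : 0 < M) {S : Finset ℕ} (hS : S ⊆ range M) (n : ℕ)
    (k : ℤ) : (countBelow (digitSet M S (n + 1)) k : ℝ) = S.card *
      linInterp (fun k => countBelow (digitSet M S n) k) (periodicCount M S k / S.card) := by
  have hM' : (0 : ℤ) < M := by exact_mod_cast hM
  conv_lhs => rw [← Int.emod_add_mul_ediv k M]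
  rw [countBelow_digitSet_succ_add_mul hS n (Int.emod_nonneg _ hM'.ne') (Int.emod_lt_of_pos _ hM')]
  rcases S.eq_empty_or_nonempty with rfl | hne
  · simp [countBelow]
  have hA : (0 : ℝ) < S.card := by exact_mod_cast hne.card_pos
  have hsA : (countBelow S (k % M) : ℝ) ≤ S.card := by exact_mod_cast card_filter_le _ _
  have hpos : (periodicCount M S k : ℝ) / S.card = (k / M : ℤ) + countBelow S (k % M) / S.card := by
    rw [periodicCount]
    push_cast
    field_simp
  rw [hpos, linInterp_intCast_add _ (by positivity) ((div_le_one hA).2 hsA)]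
  field_simp

theorem countBelow_digitSet_sub_le {M : ℕ} (hM : 0 < M) {S : Finset ℕ} (hS : S ⊆ range M) (n : ℕ)
    (i j : ℤ) : (countBelow (digitSet M S n) j : ℝ) - countBelow (digitSet M S n) i ≤
      countBelow (digitSet M (range S.card) n) (j - i) := by
  have hS' : range S.card ⊆ range M := range_subset_range.2 (by simpa using card_le_card hS)
  induction n generalizing i j with
  | zero =>
    simp only [countBelow, digitSet, filter_singleton, Nat.cast_zero]
    split_ifs <;> simp
    omega
  | succ n ih =>
    rw [countBelow_digitSet_succ hM hS, countBelow_digitSet_succ hM hS,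
      countBelow_digitSet_succ hM hS', card_range, ← mul_sub]
    gcongr
    calc _ ≤ linInterp (fun k => countBelow (digitSet M (range S.card) n) k)
          (periodicCount M S j / S.card - periodicCount M S i / S.card) :=
          linInterp_sub_le ih _ _
      _ ≤ _ := by
        refine linInterp_mono (fun a b h => by exact_mod_cast countBelow_mono _ h) ?_
        rw [← sub_div]
        gcongr
        exact_mod_cast periodicCount_sub_le hM hS i j

theorem linInterp_countBelow (D : Finset ℕ) (t : ℝ) :
    linInterp (fun k => countBelow D k) t = ∑ d ∈ D, max 0 (min 1 (t - d)) := by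
  simp only [natCast_countBelow, linInterp_sum, linInterp_indicator_lt, Int.cast_natCast]

theorem aedisjoint_Icc_mul {h : ℝ} (hh : 0 < h) {d d' : ℕ} (hne : d ≠ d') :
    AEDisjoint volume (Set.Icc (h * d) (h * d + h)) (Set.Icc (h * d') (h * d' + h)) := by
  rw [AEDisjoint, Set.Icc_inter_Icc, Real.volume_Icc, ENNReal.ofReal_eq_zero, sub_nonpos]
  rcases hne.lt_or_gt with hlt | hlt
  · have : (d : ℝ) + 1 ≤ d' := by exact_mod_cast hlt
    exact (min_le_left _ _).trans ((by nlinarith : h * d + h ≤ h * d').trans (le_max_right _ _))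
  · have : (d' : ℝ) + 1 ≤ d := by exact_mod_cast hlt
    exact (min_le_right _ _).trans ((by nlinarith : h * d' + h ≤ h * d).trans (le_max_left _ _))

theorem volume_biUnion_Icc_inter_Icc_toReal (D : Finset ℕ) {h : ℝ} (hh : 0 < h) (t : ℝ) :
    (volume ((⋃ d ∈ D, Set.Icc (h * d) (h * d + h)) ∩ Set.Icc 0 t)).toReal =
      h * linInterp (fun k => countBelow D k) (t / h) := by
  rw [Set.iUnion₂_inter, measure_biUnion_finset₀
      (fun d _ d' _ hne =>
        (aedisjoint_Icc_mul hh hne).mono Set.inter_subset_left Set.inter_subset_left)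
      (fun d _ => measurableSet_Icc.inter measurableSet_Icc |>.nullMeasurableSet),
    ENNReal.toReal_sum fun d _ =>
      measure_ne_top_of_subset Set.inter_subset_right measure_Icc_lt_top.ne,
    linInterp_countBelow, mul_sum]
  refine sum_congr rfl fun d _ => ?_
  rw [Set.Icc_inter_Icc, Real.volume_Icc, ENNReal.toReal_ofReal',
    max_eq_left (mul_nonneg hh.le d.cast_nonneg),
    ← min_sub_sub_right, add_sub_cancel_left, mul_max_of_nonneg _ _ hh.le,
    mul_min_of_nonneg _ _ hh.le, mul_zero, mul_one, mul_sub, mul_div_cancel₀ _ hh.ne', max_comm]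

theorem cantorC_one_eq_biUnion (M : ℕ) (S : Finset ℕ) (n : ℕ) :
    cantorC M S 1 n = ⋃ d ∈ digitSet M S n,
      Set.Icc (1 / (M : ℝ) ^ n * d) (1 / (M : ℝ) ^ n * d + 1 / (M : ℝ) ^ n) := by
  rw [cantorC, ← coe_digitSet, set_biUnion_coe]

theorem cantorFun_eq_toReal (M A : ℕ) (S : Finset ℕ) (n : ℕ) (t : ℝ) :
    cantorFun M A S n t = ((M : ℝ) / A) ^ n * (volume (cantorC M S 1 n ∩ Set.Icc 0 t)).toReal := by
  rw [cantorFun, mul_comm]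
  split_ifs with ht
  · rw [measure_mono_null Set.inter_subset_right (by simpa [Real.volume_Icc] using ht),
      ENNReal.toReal_zero, mul_zero]
  · rfl

theorem cantorFun_eq_linInterp {M : ℕ} (hM : 0 < M) (A : ℕ) (S : Finset ℕ) (n : ℕ) (t : ℝ) :
    cantorFun M A S n t = ((M : ℝ) / A) ^ n / M ^ n *
      linInterp (fun k => countBelow (digitSet M S n) k) (M ^ n * t) := by
  rw [cantorFun_eq_toReal, cantorC_one_eq_biUnion,
    volume_biUnion_Icc_inter_Icc_toReal _ (by positivity), div_div_eq_mul_div,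
    div_one, mul_comm t]
  ring

theorem stmt_19_general (M A : ℕ) (hM : 1 < M)
    (𝒜 : Finset ℕ) (h𝒜 : 𝒜 ⊆ Finset.range M) (hcard : 𝒜.card = A) (n : ℕ)
    (x y : ℝ) :
    cantorFun M A 𝒜 n y - cantorFun M A 𝒜 n x ≤
      cantorFun M A (Finset.range A) n (y - x) := by
  have hM₀ : 0 < M := by omega
  subst hcard
  simp only [cantorFun_eq_linInterp hM₀]
  rw [← mul_sub, mul_sub ((M : ℝ) ^ n) y x]
  gcongr
  exact linInterp_sub_le (countBelow_digitSet_sub_le hM₀ h𝒜 n) _ _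

theorem stmt_19 (M A : ℕ) (hM : 1 < M) (hA1 : 1 ≤ A) (hAM : A < M)
    (𝒜 : Finset ℕ) (h𝒜 : 𝒜 ⊆ Finset.range M) (hcard : 𝒜.card = A) (n : ℕ)
    (x y : ℝ) (hxy : x ≤ y) :
    cantorFun M A 𝒜 n y - cantorFun M A 𝒜 n x ≤
      cantorFun M A (Finset.range A) n (y - x) :=
  stmt_19_general M A hM 𝒜 h𝒜 hcard n x y
end
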